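/- arXiv:math-ph/0702033 — 6 statements merged into one kernel-verified Lean document; each statement's English description precedes it below -/
import Mathlib

section
/- Generation formula via P_0: if u is a smooth solution of the Burgers equation u_0 + u u_1 - u_11 = 0 and the quantity -½ u_1 + ¼ u² is nonvanishing, then ũ = u + u_0 / (-½ u_1 + ¼ u²) is also a solution of the Burgers equation. -/
noncomputable def Pd (v : ℝ × ℝ) (f : ℝ × ℝ → ℝ) : ℝ × ℝ → ℝ := fun p => fderiv ℝ f p v

theorem contDiff_Pd {f : ℝ × ℝ → ℝ} (v : ℝ × ℝ) (hf : ContDiff ℝ (⊤ : ℕ∞) f) :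
    ContDiff ℝ (⊤ : ℕ∞) (Pd v f) :=
  (hf.fderiv_right (by simp)).clm_apply contDiff_const

theorem Pd_Pd (f : ℝ × ℝ → ℝ) (hf : ContDiff ℝ (⊤ : ℕ∞) f) (p v w : ℝ × ℝ) :
    Pd v (Pd w f) p = fderiv ℝ (fderiv ℝ f) p v w := by
  have hd : DifferentiableAt ℝ (fderiv ℝ f) p :=
    ((hf.fderiv_right (m := (⊤ : ℕ∞)) (by simp)).differentiable (by simp)) p
  have : Pd w f = fun q => (fderiv ℝ f q) w := rfl
  rw [Pd, this, fderiv_clm_apply hd (differentiableAt_const w)]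
  simp

theorem Pd_comm (f : ℝ × ℝ → ℝ) (hf : ContDiff ℝ (⊤ : ℕ∞) f) (p v w : ℝ × ℝ) :
    Pd v (Pd w f) p = Pd w (Pd v f) p := by
  rw [Pd_Pd f hf p v w, Pd_Pd f hf p w v]
  exact hf.contDiffAt.isSymmSndFDerivAt (by norm_num; exact WithTop.coe_le_coe.mpr le_top) v w

theorem Pd_add {f g : ℝ × ℝ → ℝ} {p : ℝ × ℝ} (v : ℝ × ℝ) (hf : DifferentiableAt ℝ f p)
    (hg : DifferentiableAt ℝ g p) :
    Pd v (fun q => f q + g q) p = Pd v f p + Pd v g p := by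
  simp [Pd, fderiv_fun_add hf hg]

theorem Pd_sub {f g : ℝ × ℝ → ℝ} {p : ℝ × ℝ} (v : ℝ × ℝ) (hf : DifferentiableAt ℝ f p)
    (hg : DifferentiableAt ℝ g p) :
    Pd v (fun q => f q - g q) p = Pd v f p - Pd v g p := by
  simp [Pd, fderiv_fun_sub hf hg]

theorem Pd_mul {f g : ℝ × ℝ → ℝ} {p : ℝ × ℝ} (v : ℝ × ℝ) (hf : DifferentiableAt ℝ f p)
    (hg : DifferentiableAt ℝ g p) :
    Pd v (fun q => f q * g q) p = f p * Pd v g p + g p * Pd v f p := by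
  simp [Pd, fderiv_fun_mul hf hg]

theorem Pd_const_mul {f : ℝ × ℝ → ℝ} {p : ℝ × ℝ} (v : ℝ × ℝ) (hf : DifferentiableAt ℝ f p)
    (c : ℝ) : Pd v (fun q => c * f q) p = c * Pd v f p := by
  simp [Pd, fderiv_const_mul hf c]

theorem Pd_sq {f : ℝ × ℝ → ℝ} {p : ℝ × ℝ} (v : ℝ × ℝ) (hf : DifferentiableAt ℝ f p) :
    Pd v (fun q => f q ^ 2) p = 2 * f p * Pd v f p := by
  have h : (fun q => f q ^ 2) = fun q => f q * f q := funext fun q => pow_two (f q)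
  rw [h, Pd_mul v hf hf]; ring

theorem burgers_aux (F : ℝ × ℝ → ℝ) (hF : ContDiff ℝ (⊤ : ℕ∞) F)
    (hE : ∀ p, (Pd (1,0) F) p = (Pd (0,1) (Pd (0,1) F)) p - F p * (Pd (0,1) F) p)
    (hQne : ∀ p : ℝ × ℝ, -(1/2) * Pd (0,1) F p + (1/4) * F p ^ 2 ≠ 0) (p : ℝ × ℝ) :
    Pd (1,0) (fun q => F q + Pd (1,0) F q / (-(1/2) * Pd (0,1) F q + (1/4) * F q ^ 2)) p
    + (F p + Pd (1,0) F p / (-(1/2) * Pd (0,1) F p + (1/4) * F p ^ 2)) * Pd (0,1) (fun q => F q + Pd (1,0) F q / (-(1/2) * Pd (0,1) F q + (1/4) * F q ^ 2)) p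
    - Pd (0,1) (Pd (0,1) (fun q => F q + Pd (1,0) F q / (-(1/2) * Pd (0,1) F q + (1/4) * F q ^ 2))) p = 0 := by
  have hsF1 : ContDiff ℝ (⊤ : ℕ∞) (Pd (0,1) F) := contDiff_Pd _ hF
  have hsF0 : ContDiff ℝ (⊤ : ℕ∞) (Pd (1,0) F) := contDiff_Pd _ hF
  have hsF11 : ContDiff ℝ (⊤ : ℕ∞) (Pd (0,1) (Pd (0,1) F)) := contDiff_Pd _ hsF1
  have hsF111 : ContDiff ℝ (⊤ : ℕ∞) (Pd (0,1) (Pd (0,1) (Pd (0,1) F))) := contDiff_Pd _ hsF11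
  have hsF01 : ContDiff ℝ (⊤ : ℕ∞) (Pd (0,1) (Pd (1,0) F)) := contDiff_Pd _ hsF0
  have hsQ : ContDiff ℝ (⊤ : ℕ∞) (fun q => -(1/2) * Pd (0,1) F q + (1/4) * F q ^ 2) :=
    (contDiff_const.mul hsF1).add (contDiff_const.mul (hF.pow 2))
  have hsW : ContDiff ℝ (⊤ : ℕ∞) (fun q => Pd (1,0) F q / (-(1/2) * Pd (0,1) F q + (1/4) * F q ^ 2)) := hsF0.div hsQ hQne
  have hsW1 : ContDiff ℝ (⊤ : ℕ∞) (Pd (0,1) (fun q => Pd (1,0) F q / (-(1/2) * Pd (0,1) F q + (1/4) * F q ^ 2))) := contDiff_Pd _ hsW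
  have hsQ1 : ContDiff ℝ (⊤ : ℕ∞) (Pd (0,1) (fun q => -(1/2) * Pd (0,1) F q + (1/4) * F q ^ 2)) := contDiff_Pd _ hsQ
  have dF : ∀ q, DifferentiableAt ℝ F q := fun q => (hF.differentiable (by simp)) q
  -- PDE-derived identities
  have hEfun : (Pd (1,0) F) = fun q => (Pd (0,1) (Pd (0,1) F)) q - F q * (Pd (0,1) F) q := funext hE
  have h01 : ∀ p, Pd (0,1) (Pd (1,0) F) p = (Pd (0,1) (Pd (0,1) (Pd (0,1) F))) p - (Pd (0,1) F) p * (Pd (0,1) F) p - F p * (Pd (0,1) (Pd (0,1) F)) p := by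
    intro p
    rw [hEfun, Pd_sub (0,1) ((hsF11.differentiable (by simp)) p)
          (((hF.mul hsF1).differentiable (by simp)) p),
        Pd_mul (0,1) (dF p) ((hsF1.differentiable (by simp)) p)]
    ring
  have h01fun : Pd (0,1) (Pd (1,0) F) = fun q => (Pd (0,1) (Pd (0,1) (Pd (0,1) F))) q - (Pd (0,1) F) q * (Pd (0,1) F) q - F q * (Pd (0,1) (Pd (0,1) F)) q := funext h01
  have h011 : ∀ p, Pd (0,1) (Pd (0,1) (Pd (1,0) F)) p
      = (Pd (0,1) (Pd (0,1) (Pd (0,1) (Pd (0,1) F)))) p - 3 * ((Pd (0,1) F) p * (Pd (0,1) (Pd (0,1) F)) p) - F p * (Pd (0,1) (Pd (0,1) (Pd (0,1) F))) p := by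
    intro p
    rw [h01fun,
        Pd_sub (0,1) (((hsF111.sub (hsF1.mul hsF1)).differentiable (by simp)) p)
          (((hF.mul hsF11).differentiable (by simp)) p),
        Pd_sub (0,1) ((hsF111.differentiable (by simp)) p)
          (((hsF1.mul hsF1).differentiable (by simp)) p),
        Pd_mul (0,1) ((hsF1.differentiable (by simp)) p) ((hsF1.differentiable (by simp)) p),
        Pd_mul (0,1) (dF p) ((hsF11.differentiable (by simp)) p)]
    ring
  have hcomm : ∀ p, Pd (1,0) (Pd (0,1) F) p = Pd (0,1) (Pd (1,0) F) p := fun p => Pd_comm F hF p (1,0) (0,1)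
  have hcommfun : Pd (1,0) (Pd (0,1) F) = Pd (0,1) (Pd (1,0) F) := funext hcomm
  have h00 : ∀ p, Pd (1,0) (Pd (1,0) F) p
      = Pd (0,1) (Pd (0,1) (Pd (1,0) F)) p - F p * Pd (0,1) (Pd (1,0) F) p - (Pd (0,1) F) p * (Pd (1,0) F) p := by
    intro p
    conv_lhs => rw [hEfun]
    rw [Pd_sub (1,0) ((hsF11.differentiable (by simp)) p) (((hF.mul hsF1).differentiable (by simp)) p),
        Pd_mul (1,0) (dF p) ((hsF1.differentiable (by simp)) p),
        show Pd (1,0) (Pd (0,1) (Pd (0,1) F)) p = Pd (0,1) (Pd (1,0) (Pd (0,1) F)) p from Pd_comm (Pd (0,1) F) hsF1 p (1,0) (0,1),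
        hcommfun]
    ring
  -- Q derivatives
  have hQ1 : ∀ p, Pd (0,1) (fun q => -(1/2) * Pd (0,1) F q + (1/4) * F q ^ 2) p = -(1/2) * (Pd (0,1) (Pd (0,1) F)) p + (1/2) * (F p * (Pd (0,1) F) p) := by
    intro p
    rw [Pd_add (0,1) (((contDiff_const.mul hsF1).differentiable (by simp)) p)
          (((contDiff_const.mul (hF.pow 2)).differentiable (by simp)) p),
        Pd_const_mul (0,1) ((hsF1.differentiable (by simp)) p),
        Pd_const_mul (0,1) (((hF.pow 2).differentiable (by simp)) p),
        Pd_sq (0,1) (dF p)]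
    ring
  have hQ1fun : Pd (0,1) (fun q => -(1/2) * Pd (0,1) F q + (1/4) * F q ^ 2) = fun q => -(1/2) * (Pd (0,1) (Pd (0,1) F)) q + (1/2) * (F q * (Pd (0,1) F) q) := funext hQ1
  have hQ11 : ∀ p, Pd (0,1) (Pd (0,1) (fun q => -(1/2) * Pd (0,1) F q + (1/4) * F q ^ 2)) p
      = -(1/2) * (Pd (0,1) (Pd (0,1) (Pd (0,1) F))) p + (1/2) * ((Pd (0,1) F) p * (Pd (0,1) F) p + F p * (Pd (0,1) (Pd (0,1) F)) p) := by
    intro p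
    rw [hQ1fun,
        Pd_add (0,1) (((contDiff_const.mul hsF11).differentiable (by simp)) p)
          (((contDiff_const.mul (hF.mul hsF1)).differentiable (by simp)) p),
        Pd_const_mul (0,1) ((hsF11.differentiable (by simp)) p),
        Pd_const_mul (0,1) (((hF.mul hsF1).differentiable (by simp)) p),
        Pd_mul (0,1) (dF p) ((hsF1.differentiable (by simp)) p)]
    ring
  have hQ0 : ∀ p, Pd (1,0) (fun q => -(1/2) * Pd (0,1) F q + (1/4) * F q ^ 2) p = -(1/2) * Pd (0,1) (Pd (1,0) F) p + (1/2) * (F p * (Pd (1,0) F) p) := by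
    intro p
    rw [Pd_add (1,0) (((contDiff_const.mul hsF1).differentiable (by simp)) p)
          (((contDiff_const.mul (hF.pow 2)).differentiable (by simp)) p),
        Pd_const_mul (1,0) ((hsF1.differentiable (by simp)) p),
        Pd_const_mul (1,0) (((hF.pow 2).differentiable (by simp)) p),
        Pd_sq (1,0) (dF p), hcomm p]
    ring
  -- w = F0 / Q relations
  have hwQ : (fun q => ((fun q => Pd (1,0) F q / (-(1/2) * Pd (0,1) F q + (1/4) * F q ^ 2)) q) * ((fun q => -(1/2) * Pd (0,1) F q + (1/4) * F q ^ 2) q)) = (Pd (1,0) F) :=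
    funext fun q => div_mul_cancel₀ ((Pd (1,0) F) q) (hQne q)
  have R1 : ∀ p, Pd (0,1) (Pd (1,0) F) p
      = (Pd (1,0) F p / (-(1/2) * Pd (0,1) F p + (1/4) * F p ^ 2)) * Pd (0,1) (fun q => -(1/2) * Pd (0,1) F q + (1/4) * F q ^ 2) p + (-(1/2) * Pd (0,1) F p + (1/4) * F p ^ 2) * Pd (0,1) (fun q => Pd (1,0) F q / (-(1/2) * Pd (0,1) F q + (1/4) * F q ^ 2)) p := by
    intro p
    conv_lhs => rw [← hwQ]
    exact Pd_mul (0,1) ((hsW.differentiable (by simp)) p) ((hsQ.differentiable (by simp)) p)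
  have R0 : ∀ p, Pd (1,0) (Pd (1,0) F) p
      = (Pd (1,0) F p / (-(1/2) * Pd (0,1) F p + (1/4) * F p ^ 2)) * Pd (1,0) (fun q => -(1/2) * Pd (0,1) F q + (1/4) * F q ^ 2) p + (-(1/2) * Pd (0,1) F p + (1/4) * F p ^ 2) * Pd (1,0) (fun q => Pd (1,0) F q / (-(1/2) * Pd (0,1) F q + (1/4) * F q ^ 2)) p := by
    intro p
    conv_lhs => rw [← hwQ]
    exact Pd_mul (1,0) ((hsW.differentiable (by simp)) p) ((hsQ.differentiable (by simp)) p)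
  have R1fun : Pd (0,1) (Pd (1,0) F)
      = fun p => (Pd (1,0) F p / (-(1/2) * Pd (0,1) F p + (1/4) * F p ^ 2)) * Pd (0,1) (fun q => -(1/2) * Pd (0,1) F q + (1/4) * F q ^ 2) p + (-(1/2) * Pd (0,1) F p + (1/4) * F p ^ 2) * Pd (0,1) (fun q => Pd (1,0) F q / (-(1/2) * Pd (0,1) F q + (1/4) * F q ^ 2)) p := funext R1
  have R11 : ∀ p, Pd (0,1) (Pd (0,1) (Pd (1,0) F)) p
      = ((Pd (1,0) F p / (-(1/2) * Pd (0,1) F p + (1/4) * F p ^ 2)) * Pd (0,1) (Pd (0,1) (fun q => -(1/2) * Pd (0,1) F q + (1/4) * F q ^ 2)) p + Pd (0,1) (fun q => -(1/2) * Pd (0,1) F q + (1/4) * F q ^ 2) p * Pd (0,1) (fun q => Pd (1,0) F q / (-(1/2) * Pd (0,1) F q + (1/4) * F q ^ 2)) p)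
        + ((-(1/2) * Pd (0,1) F p + (1/4) * F p ^ 2) * Pd (0,1) (Pd (0,1) (fun q => Pd (1,0) F q / (-(1/2) * Pd (0,1) F q + (1/4) * F q ^ 2))) p + Pd (0,1) (fun q => Pd (1,0) F q / (-(1/2) * Pd (0,1) F q + (1/4) * F q ^ 2)) p * Pd (0,1) (fun q => -(1/2) * Pd (0,1) F q + (1/4) * F q ^ 2) p) := by
    intro p
    rw [R1fun,
        Pd_add (0,1) (((hsW.mul hsQ1).differentiable (by simp)) p)
          (((hsQ.mul hsW1).differentiable (by simp)) p),
        Pd_mul (0,1) ((hsW.differentiable (by simp)) p) ((hsQ1.differentiable (by simp)) p),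
        Pd_mul (0,1) ((hsQ.differentiable (by simp)) p) ((hsW1.differentiable (by simp)) p)]
  -- G derivatives
  have hG1 : ∀ p, Pd (0,1) (fun q => F q + Pd (1,0) F q / (-(1/2) * Pd (0,1) F q + (1/4) * F q ^ 2)) p = (Pd (0,1) F) p + Pd (0,1) (fun q => Pd (1,0) F q / (-(1/2) * Pd (0,1) F q + (1/4) * F q ^ 2)) p := fun p =>
    Pd_add (0,1) (dF p) ((hsW.differentiable (by simp)) p)
  have hG0 : ∀ p, Pd (1,0) (fun q => F q + Pd (1,0) F q / (-(1/2) * Pd (0,1) F q + (1/4) * F q ^ 2)) p = (Pd (1,0) F) p + Pd (1,0) (fun q => Pd (1,0) F q / (-(1/2) * Pd (0,1) F q + (1/4) * F q ^ 2)) p := fun p =>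
    Pd_add (1,0) (dF p) ((hsW.differentiable (by simp)) p)
  have hG1fun : Pd (0,1) (fun q => F q + Pd (1,0) F q / (-(1/2) * Pd (0,1) F q + (1/4) * F q ^ 2)) = fun q => (Pd (0,1) F) q + Pd (0,1) (fun q => Pd (1,0) F q / (-(1/2) * Pd (0,1) F q + (1/4) * F q ^ 2)) q := funext hG1
  have hG11 : ∀ p, Pd (0,1) (Pd (0,1) (fun q => F q + Pd (1,0) F q / (-(1/2) * Pd (0,1) F q + (1/4) * F q ^ 2))) p = (Pd (0,1) (Pd (0,1) F)) p + Pd (0,1) (Pd (0,1) (fun q => Pd (1,0) F q / (-(1/2) * Pd (0,1) F q + (1/4) * F q ^ 2))) p := by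
    intro p
    rw [hG1fun]
    exact Pd_add (0,1) ((hsF1.differentiable (by simp)) p) ((hsW1.differentiable (by simp)) p)
  -- solve for w derivatives at the fixed point p
  have hw1 : Pd (0,1) (fun q => Pd (1,0) F q / (-(1/2) * Pd (0,1) F q + (1/4) * F q ^ 2)) p = (Pd (0,1) (Pd (1,0) F) p - (Pd (1,0) F p / (-(1/2) * Pd (0,1) F p + (1/4) * F p ^ 2)) * Pd (0,1) (fun q => -(1/2) * Pd (0,1) F q + (1/4) * F q ^ 2) p) / (-(1/2) * Pd (0,1) F p + (1/4) * F p ^ 2) := by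
    rw [eq_div_iff (hQne p)]
    linear_combination -R1 p
  have hw0 : Pd (1,0) (fun q => Pd (1,0) F q / (-(1/2) * Pd (0,1) F q + (1/4) * F q ^ 2)) p = (Pd (1,0) (Pd (1,0) F) p - (Pd (1,0) F p / (-(1/2) * Pd (0,1) F p + (1/4) * F p ^ 2)) * Pd (1,0) (fun q => -(1/2) * Pd (0,1) F q + (1/4) * F q ^ 2) p) / (-(1/2) * Pd (0,1) F p + (1/4) * F p ^ 2) := by
    rw [eq_div_iff (hQne p)]
    linear_combination -R0 p
  have hw11 : Pd (0,1) (Pd (0,1) (fun q => Pd (1,0) F q / (-(1/2) * Pd (0,1) F q + (1/4) * F q ^ 2))) p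
      = (Pd (0,1) (Pd (0,1) (Pd (1,0) F)) p - (Pd (1,0) F p / (-(1/2) * Pd (0,1) F p + (1/4) * F p ^ 2)) * Pd (0,1) (Pd (0,1) (fun q => -(1/2) * Pd (0,1) F q + (1/4) * F q ^ 2)) p
         - 2 * (Pd (0,1) (fun q => -(1/2) * Pd (0,1) F q + (1/4) * F q ^ 2) p * Pd (0,1) (fun q => Pd (1,0) F q / (-(1/2) * Pd (0,1) F q + (1/4) * F q ^ 2)) p)) / (-(1/2) * Pd (0,1) F p + (1/4) * F p ^ 2) := by
    rw [eq_div_iff (hQne p)]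
    linear_combination -R11 p
  rw [hG0 p, hG1 p, hG11 p, hw0, hw11, hw1, h00 p, hQ0 p, h011 p, hQ11 p, h01 p, hQ1 p, hE p]
  have hQp := hQne p
  set qv : ℝ := -(1/2) * Pd (0,1) F p + (1/4) * F p ^ 2 with hqv
  field_simp [hQp]
  rw [hqv]
  ring

noncomputable def d0 (u : ℝ → ℝ → ℝ) : ℝ → ℝ → ℝ := fun t x => deriv (fun s => u s x) t
noncomputable def d1 (u : ℝ → ℝ → ℝ) : ℝ → ℝ → ℝ := fun t x => deriv (fun y => u t y) x

theorem d0_eq (v : ℝ → ℝ → ℝ) {t x : ℝ}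
    (hv : DifferentiableAt ℝ (fun p : ℝ × ℝ => v p.1 p.2) (t, x)) :
    d0 v t x = Pd (1, 0) (fun p : ℝ × ℝ => v p.1 p.2) (t, x) := by
  have h1 : HasDerivAt (fun s : ℝ => (s, x)) ((1 : ℝ), (0 : ℝ)) t :=
    (hasDerivAt_id t).prodMk (hasDerivAt_const t x)
  exact (hv.hasFDerivAt.comp_hasDerivAt t h1).deriv

theorem d1_eq (v : ℝ → ℝ → ℝ) {t x : ℝ}
    (hv : DifferentiableAt ℝ (fun p : ℝ × ℝ => v p.1 p.2) (t, x)) :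
    d1 v t x = Pd (0, 1) (fun p : ℝ × ℝ => v p.1 p.2) (t, x) := by
  have h1 : HasDerivAt (fun y : ℝ => (t, y)) ((0 : ℝ), (1 : ℝ)) x :=
    (hasDerivAt_const x t).prodMk (hasDerivAt_id x)
  exact (hv.hasFDerivAt.comp_hasDerivAt x h1).deriv

theorem burgers_gen_P0 (u : ℝ → ℝ → ℝ)
    (hu : ContDiff ℝ (⊤ : ℕ∞) (fun p : ℝ × ℝ => u p.1 p.2))
    (hburgers : ∀ t x, d0 u t x + u t x * d1 u t x - d1 (d1 u) t x = 0)
    (hden : ∀ t x, -(1/2) * d1 u t x + (1/4) * (u t x)^2 ≠ 0) :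
    ∀ t x, d0 (fun a b => u a b + d0 u a b / (-(1/2) * d1 u a b + (1/4) * (u a b)^2)) t x
      + (u t x + d0 u t x / (-(1/2) * d1 u t x + (1/4) * (u t x)^2))
        * d1 (fun a b => u a b + d0 u a b / (-(1/2) * d1 u a b + (1/4) * (u a b)^2)) t x
      - d1 (d1 (fun a b => u a b + d0 u a b / (-(1/2) * d1 u a b + (1/4) * (u a b)^2))) t x = 0 := by
  have hsF1 : ContDiff ℝ (⊤ : ℕ∞) (Pd (0,1) (fun p : ℝ × ℝ => u p.1 p.2)) := contDiff_Pd _ hu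
  have hsF0 : ContDiff ℝ (⊤ : ℕ∞) (Pd (1,0) (fun p : ℝ × ℝ => u p.1 p.2)) := contDiff_Pd _ hu
  have hd1 : ∀ t x, d1 u t x = Pd (0,1) (fun p : ℝ × ℝ => u p.1 p.2) (t, x) := fun t x =>
    d1_eq u ((hu.differentiable (by simp)) (t, x))
  have hd0 : ∀ t x, d0 u t x = Pd (1,0) (fun p : ℝ × ℝ => u p.1 p.2) (t, x) := fun t x =>
    d0_eq u ((hu.differentiable (by simp)) (t, x))
  have h1fun : (fun p : ℝ × ℝ => d1 u p.1 p.2) = Pd (0,1) (fun p : ℝ × ℝ => u p.1 p.2) :=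
    funext fun p => hd1 p.1 p.2
  have hd11 : ∀ t x, d1 (d1 u) t x = Pd (0,1) (Pd (0,1) (fun p : ℝ × ℝ => u p.1 p.2)) (t, x) := by
    intro t x
    rw [d1_eq (d1 u) (by rw [h1fun]; exact (hsF1.differentiable (by simp)) (t, x)), h1fun]
  have hE : ∀ p : ℝ × ℝ, Pd (1,0) (fun p : ℝ × ℝ => u p.1 p.2) p
      = Pd (0,1) (Pd (0,1) (fun p : ℝ × ℝ => u p.1 p.2)) p - u p.1 p.2 * Pd (0,1) (fun p : ℝ × ℝ => u p.1 p.2) p := by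
    intro p
    have h := hburgers p.1 p.2
    rw [hd0 p.1 p.2, hd1 p.1 p.2, hd11 p.1 p.2] at h
    linarith [h]
  have hQne : ∀ p : ℝ × ℝ, -(1/2) * Pd (0,1) (fun p : ℝ × ℝ => u p.1 p.2) p + (1/4) * u p.1 p.2 ^ 2 ≠ 0 := by
    intro p
    have h := hden p.1 p.2
    rw [hd1 p.1 p.2] at h
    exact h
  have hsQ : ContDiff ℝ (⊤ : ℕ∞) (fun p : ℝ × ℝ => -(1/2) * Pd (0,1) (fun p : ℝ × ℝ => u p.1 p.2) p + (1/4) * u p.1 p.2 ^ 2) :=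
    (contDiff_const.mul hsF1).add (contDiff_const.mul (hu.pow 2))
  have hsG : ContDiff ℝ (⊤ : ℕ∞) (fun p : ℝ × ℝ => u p.1 p.2 + Pd (1,0) (fun p : ℝ × ℝ => u p.1 p.2) p / (-(1/2) * Pd (0,1) (fun p : ℝ × ℝ => u p.1 p.2) p + (1/4) * u p.1 p.2 ^ 2)) := hu.add (hsF0.div hsQ hQne)
  have hsG1 : ContDiff ℝ (⊤ : ℕ∞) (Pd (0,1) (fun p : ℝ × ℝ => u p.1 p.2 + Pd (1,0) (fun p : ℝ × ℝ => u p.1 p.2) p / (-(1/2) * Pd (0,1) (fun p : ℝ × ℝ => u p.1 p.2) p + (1/4) * u p.1 p.2 ^ 2))) := contDiff_Pd _ hsG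
  have hGfun : (fun p : ℝ × ℝ => (fun a b => u a b + d0 u a b / (-(1/2) * d1 u a b + (1/4) * (u a b)^2)) p.1 p.2) = (fun p : ℝ × ℝ => u p.1 p.2 + Pd (1,0) (fun p : ℝ × ℝ => u p.1 p.2) p / (-(1/2) * Pd (0,1) (fun p : ℝ × ℝ => u p.1 p.2) p + (1/4) * u p.1 p.2 ^ 2)) := by
    funext p
    simp only [hd0 p.1 p.2, hd1 p.1 p.2]
  have e0g : ∀ t x, d0 (fun a b => u a b + d0 u a b / (-(1/2) * d1 u a b + (1/4) * (u a b)^2)) t x = Pd (1,0) (fun p : ℝ × ℝ => u p.1 p.2 + Pd (1,0) (fun p : ℝ × ℝ => u p.1 p.2) p / (-(1/2) * Pd (0,1) (fun p : ℝ × ℝ => u p.1 p.2) p + (1/4) * u p.1 p.2 ^ 2)) (t, x) := by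
    intro t x
    rw [d0_eq (fun a b => u a b + d0 u a b / (-(1/2) * d1 u a b + (1/4) * (u a b)^2)) (by rw [hGfun]; exact (hsG.differentiable (by simp)) (t, x)), hGfun]
  have e1g : ∀ t x, d1 (fun a b => u a b + d0 u a b / (-(1/2) * d1 u a b + (1/4) * (u a b)^2)) t x = Pd (0,1) (fun p : ℝ × ℝ => u p.1 p.2 + Pd (1,0) (fun p : ℝ × ℝ => u p.1 p.2) p / (-(1/2) * Pd (0,1) (fun p : ℝ × ℝ => u p.1 p.2) p + (1/4) * u p.1 p.2 ^ 2)) (t, x) := by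
    intro t x
    rw [d1_eq (fun a b => u a b + d0 u a b / (-(1/2) * d1 u a b + (1/4) * (u a b)^2)) (by rw [hGfun]; exact (hsG.differentiable (by simp)) (t, x)), hGfun]
  have hG1fun : (fun p : ℝ × ℝ => d1 (fun a b => u a b + d0 u a b / (-(1/2) * d1 u a b + (1/4) * (u a b)^2)) p.1 p.2) = Pd (0,1) (fun p : ℝ × ℝ => u p.1 p.2 + Pd (1,0) (fun p : ℝ × ℝ => u p.1 p.2) p / (-(1/2) * Pd (0,1) (fun p : ℝ × ℝ => u p.1 p.2) p + (1/4) * u p.1 p.2 ^ 2)) :=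
    funext fun p => e1g p.1 p.2
  have e11g : ∀ t x, d1 (d1 (fun a b => u a b + d0 u a b / (-(1/2) * d1 u a b + (1/4) * (u a b)^2))) t x = Pd (0,1) (Pd (0,1) (fun p : ℝ × ℝ => u p.1 p.2 + Pd (1,0) (fun p : ℝ × ℝ => u p.1 p.2) p / (-(1/2) * Pd (0,1) (fun p : ℝ × ℝ => u p.1 p.2) p + (1/4) * u p.1 p.2 ^ 2))) (t, x) := by
    intro t x
    rw [d1_eq (d1 (fun a b => u a b + d0 u a b / (-(1/2) * d1 u a b + (1/4) * (u a b)^2))) (by rw [hG1fun]; exact (hsG1.differentiable (by simp)) (t, x)), hG1fun]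
  intro t x
  rw [e0g t x, e1g t x, e11g t x, hd0 t x, hd1 t x]
  exact burgers_aux (fun p : ℝ × ℝ => u p.1 p.2) hu hE hQne (t, x)
end

section
/- Generation formula via P_0 + P_1: if u is a smooth solution of the Burgers equation u_0 + u u_1 - u_11 = 0 and u_1 - ½ u² + u is nonvanishing, then ũ = u - 2 (u_0 + u_1)/(u_1 - ½ u² + u) is also a solution of the Burgers equation. -/
section Aux
variable {v : ℝ → ℝ → ℝ}

lemma lineD1 (hv : ContDiff ℝ (⊤ : ℕ∞) (fun p : ℝ × ℝ => v p.1 p.2)) (t x : ℝ) :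
    HasDerivAt (fun y => v t y) (fderiv ℝ (fun p : ℝ × ℝ => v p.1 p.2) (t, x) (0, 1)) x := by
  have h := (hv.differentiable (by simp) (t, x)).hasFDerivAt
  have hline : HasDerivAt (fun y : ℝ => ((t, y) : ℝ × ℝ)) ((0 : ℝ), (1 : ℝ)) x :=
    (hasDerivAt_const x t).prodMk (hasDerivAt_id x)
  exact h.comp_hasDerivAt x hline

lemma lineD0 (hv : ContDiff ℝ (⊤ : ℕ∞) (fun p : ℝ × ℝ => v p.1 p.2)) (t x : ℝ) :
    HasDerivAt (fun s => v s x) (fderiv ℝ (fun p : ℝ × ℝ => v p.1 p.2) (t, x) (1, 0)) t := by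
  have h := (hv.differentiable (by simp) (t, x)).hasFDerivAt
  have hline : HasDerivAt (fun s : ℝ => ((s, x) : ℝ × ℝ)) ((1 : ℝ), (0 : ℝ)) t :=
    (hasDerivAt_id t).prodMk (hasDerivAt_const t x)
  exact h.comp_hasDerivAt t hline

lemma hasD1 (hv : ContDiff ℝ (⊤ : ℕ∞) (fun p : ℝ × ℝ => v p.1 p.2)) (t x : ℝ) :
    HasDerivAt (fun y => v t y) (d1 v t x) x :=
  (lineD1 hv t x).differentiableAt.hasDerivAt

lemma hasD0 (hv : ContDiff ℝ (⊤ : ℕ∞) (fun p : ℝ × ℝ => v p.1 p.2)) (t x : ℝ) :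
    HasDerivAt (fun s => v s x) (d0 v t x) t :=
  (lineD0 hv t x).differentiableAt.hasDerivAt

lemma d1_eq_fderiv (hv : ContDiff ℝ (⊤ : ℕ∞) (fun p : ℝ × ℝ => v p.1 p.2)) (t x : ℝ) :
    d1 v t x = fderiv ℝ (fun p : ℝ × ℝ => v p.1 p.2) (t, x) (0, 1) :=
  (lineD1 hv t x).deriv

lemma d0_eq_fderiv (hv : ContDiff ℝ (⊤ : ℕ∞) (fun p : ℝ × ℝ => v p.1 p.2)) (t x : ℝ) :
    d0 v t x = fderiv ℝ (fun p : ℝ × ℝ => v p.1 p.2) (t, x) (1, 0) :=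
  (lineD0 hv t x).deriv

lemma smoothD1 (hv : ContDiff ℝ (⊤ : ℕ∞) (fun p : ℝ × ℝ => v p.1 p.2)) :
    ContDiff ℝ (⊤ : ℕ∞) (fun p : ℝ × ℝ => d1 v p.1 p.2) := by
  have : (fun p : ℝ × ℝ => d1 v p.1 p.2)
      = fun p : ℝ × ℝ => fderiv ℝ (fun q : ℝ × ℝ => v q.1 q.2) p (0, 1) := by
    funext p
    exact d1_eq_fderiv hv p.1 p.2
  rw [this]
  exact (hv.fderiv_right (by simp)).clm_apply contDiff_const

lemma smoothD0 (hv : ContDiff ℝ (⊤ : ℕ∞) (fun p : ℝ × ℝ => v p.1 p.2)) :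
    ContDiff ℝ (⊤ : ℕ∞) (fun p : ℝ × ℝ => d0 v p.1 p.2) := by
  have : (fun p : ℝ × ℝ => d0 v p.1 p.2)
      = fun p : ℝ × ℝ => fderiv ℝ (fun q : ℝ × ℝ => v q.1 q.2) p (1, 0) := by
    funext p
    exact d0_eq_fderiv hv p.1 p.2
  rw [this]
  exact (hv.fderiv_right (by simp)).clm_apply contDiff_const

lemma swapD (hv : ContDiff ℝ (⊤ : ℕ∞) (fun p : ℝ × ℝ => v p.1 p.2)) (t x : ℝ) :
    d0 (d1 v) t x = d1 (d0 v) t x := by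
  set U : ℝ × ℝ → ℝ := fun p => v p.1 p.2 with hU
  have hfd : ContDiff ℝ (⊤ : ℕ∞) (fderiv ℝ U) := hv.fderiv_right (by simp)
  have hsymm := second_derivative_symmetric
    (f := U) (f' := fderiv ℝ U) (f'' := fderiv ℝ (fderiv ℝ U) (t, x)) (x := (t, x))
    (fun y => (hv.differentiable (by simp) y).hasFDerivAt)
    ((hfd.differentiable (by simp) (t, x)).hasFDerivAt)
  have e1 : d0 (d1 v) t x
      = fderiv ℝ (fun p : ℝ × ℝ => fderiv ℝ U p (0, 1)) (t, x) (1, 0) := by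
    rw [d0_eq_fderiv (smoothD1 hv) t x,
      show (fun p : ℝ × ℝ => d1 v p.1 p.2) = fun p => fderiv ℝ U p (0, 1) from
        funext fun p => d1_eq_fderiv hv p.1 p.2]
  have e2 : d1 (d0 v) t x
      = fderiv ℝ (fun p : ℝ × ℝ => fderiv ℝ U p (1, 0)) (t, x) (0, 1) := by
    rw [d1_eq_fderiv (smoothD0 hv) t x,
      show (fun p : ℝ × ℝ => d0 v p.1 p.2) = fun p => fderiv ℝ U p (1, 0) from
        funext fun p => d0_eq_fderiv hv p.1 p.2]
  have key : ∀ a b : ℝ × ℝ,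
      fderiv ℝ (fun p : ℝ × ℝ => fderiv ℝ U p a) (t, x) b
        = fderiv ℝ (fderiv ℝ U) (t, x) b a := by
    intro a b
    rw [fderiv_clm_apply (hfd.differentiable (by simp) (t, x)) (differentiableAt_const a)]
    simp
  rw [e1, e2, key, key, hsymm]

end Aux

set_option maxHeartbeats 2000000 in
theorem burgers_gen_P0P1 (u : ℝ → ℝ → ℝ)
    (hu : ContDiff ℝ (⊤ : ℕ∞) (fun p : ℝ × ℝ => u p.1 p.2))
    (hburgers : ∀ t x, d0 u t x + u t x * d1 u t x - d1 (d1 u) t x = 0)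
    (hden : ∀ t x, d1 u t x - (1/2) * (u t x)^2 + u t x ≠ 0) :
    ∀ t x, d0 (fun a b => u a b - 2 * (d0 u a b + d1 u a b) / (d1 u a b - (1/2) * (u a b)^2 + u a b)) t x
      + (u t x - 2 * (d0 u t x + d1 u t x) / (d1 u t x - (1/2) * (u t x)^2 + u t x))
        * d1 (fun a b => u a b - 2 * (d0 u a b + d1 u a b) / (d1 u a b - (1/2) * (u a b)^2 + u a b)) t x
      - d1 (d1 (fun a b => u a b - 2 * (d0 u a b + d1 u a b) / (d1 u a b - (1/2) * (u a b)^2 + u a b))) t x = 0 := by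
  have h0 := smoothD0 hu
  have h1 := smoothD1 hu
  have h10 := smoothD1 h0
  have h11 := smoothD1 h1
  intro t x
  -- derivative of the denominator and numerator along x, at an arbitrary point
  have keyD : ∀ a b : ℝ, HasDerivAt
      (fun y => d1 u a y - 1/2 * u a y ^ 2 + u a y)
      (d1 (d1 u) a b - u a b * d1 u a b + d1 u a b) b := by
    intro a b
    have h := ((hasD1 h1 a b).sub (((hasD1 hu a b).pow 2).const_mul (1/2))).add (hasD1 hu a b)
    refine h.congr_deriv ?_
    simp only [Pi.add_apply, Pi.sub_apply, Pi.mul_apply, Pi.pow_apply, Nat.cast_ofNat]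
    ring
  have key1 : ∀ a b : ℝ, HasDerivAt
      (fun y => u a y - 2 * (d0 u a y + d1 u a y) / (d1 u a y - 1/2 * u a y ^ 2 + u a y))
      (d1 u a b - (2 * (d1 (d0 u) a b + d1 (d1 u) a b)
            * (d1 u a b - 1/2 * u a b ^ 2 + u a b)
          - 2 * (d0 u a b + d1 u a b)
            * (d1 (d1 u) a b - u a b * d1 u a b + d1 u a b))
        / (d1 u a b - 1/2 * u a b ^ 2 + u a b) ^ 2) b := by
    intro a b
    have h := (hasD1 hu a b).sub
      ((((hasD1 h0 a b).add (hasD1 h1 a b)).const_mul 2).div (keyD a b) (hden a b))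
    exact h
  have e1 : ∀ a b : ℝ, d1 (fun a b => u a b - 2 * (d0 u a b + d1 u a b)
      / (d1 u a b - (1/2) * (u a b)^2 + u a b)) a b
      = d1 u a b - (2 * (d1 (d0 u) a b + d1 (d1 u) a b)
            * (d1 u a b - 1/2 * u a b ^ 2 + u a b)
          - 2 * (d0 u a b + d1 u a b)
            * (d1 (d1 u) a b - u a b * d1 u a b + d1 u a b))
        / (d1 u a b - 1/2 * u a b ^ 2 + u a b) ^ 2 := fun a b => (key1 a b).deriv
  -- d0 of the transformed function at (t, x)
  have keyD0 : HasDerivAt (fun s => d1 u s x - 1/2 * u s x ^ 2 + u s x)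
      (d0 (d1 u) t x - u t x * d0 u t x + d0 u t x) t := by
    have h := ((hasD0 h1 t x).sub (((hasD0 hu t x).pow 2).const_mul (1/2))).add (hasD0 hu t x)
    refine h.congr_deriv ?_
    simp only [Pi.add_apply, Pi.sub_apply, Pi.mul_apply, Pi.pow_apply, Nat.cast_ofNat]
    ring
  have key0 : HasDerivAt
      (fun s => u s x - 2 * (d0 u s x + d1 u s x) / (d1 u s x - 1/2 * u s x ^ 2 + u s x))
      (d0 u t x - (2 * (d0 (d0 u) t x + d0 (d1 u) t x)
            * (d1 u t x - 1/2 * u t x ^ 2 + u t x)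
          - 2 * (d0 u t x + d1 u t x)
            * (d0 (d1 u) t x - u t x * d0 u t x + d0 u t x))
        / (d1 u t x - 1/2 * u t x ^ 2 + u t x) ^ 2) t := by
    have h := (hasD0 hu t x).sub
      ((((hasD0 h0 t x).add (hasD0 h1 t x)).const_mul 2).div keyD0 (hden t x))
    exact h
  have e0 : d0 (fun a b => u a b - 2 * (d0 u a b + d1 u a b)
      / (d1 u a b - (1/2) * (u a b)^2 + u a b)) t x
      = d0 u t x - (2 * (d0 (d0 u) t x + d0 (d1 u) t x)
            * (d1 u t x - 1/2 * u t x ^ 2 + u t x)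
          - 2 * (d0 u t x + d1 u t x)
            * (d0 (d1 u) t x - u t x * d0 u t x + d0 u t x))
        / (d1 u t x - 1/2 * u t x ^ 2 + u t x) ^ 2 := key0.deriv
  -- second x-derivative of the transformed function
  have keyD1D : HasDerivAt
      (fun y => d1 (d1 u) t y - u t y * d1 u t y + d1 u t y)
      (d1 (d1 (d1 u)) t x - (d1 u t x * d1 u t x + u t x * d1 (d1 u) t x)
        + d1 (d1 u) t x) x :=
    ((hasD1 h11 t x).sub ((hasD1 hu t x).mul (hasD1 h1 t x))).add (hasD1 h1 t x)
  have key11 : HasDerivAt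
      (fun y => d1 u t y - (2 * (d1 (d0 u) t y + d1 (d1 u) t y)
            * (d1 u t y - 1/2 * u t y ^ 2 + u t y)
          - 2 * (d0 u t y + d1 u t y)
            * (d1 (d1 u) t y - u t y * d1 u t y + d1 u t y))
        / (d1 u t y - 1/2 * u t y ^ 2 + u t y) ^ 2)
      (d1 (d1 u) t x -
        ((2 * (d1 (d1 (d0 u)) t x + d1 (d1 (d1 u)) t x)
              * (d1 u t x - 1/2 * u t x ^ 2 + u t x)
            + 2 * (d1 (d0 u) t x + d1 (d1 u) t x)
              * (d1 (d1 u) t x - u t x * d1 u t x + d1 u t x)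
          - (2 * (d1 (d0 u) t x + d1 (d1 u) t x)
              * (d1 (d1 u) t x - u t x * d1 u t x + d1 u t x)
            + 2 * (d0 u t x + d1 u t x)
              * (d1 (d1 (d1 u)) t x - (d1 u t x * d1 u t x + u t x * d1 (d1 u) t x)
                  + d1 (d1 u) t x)))
          * ((d1 u t x - 1/2 * u t x ^ 2 + u t x) ^ 2)
         - (2 * (d1 (d0 u) t x + d1 (d1 u) t x)
              * (d1 u t x - 1/2 * u t x ^ 2 + u t x)
            - 2 * (d0 u t x + d1 u t x)
              * (d1 (d1 u) t x - u t x * d1 u t x + d1 u t x))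
           * (2 * (d1 u t x - 1/2 * u t x ^ 2 + u t x)
              * (d1 (d1 u) t x - u t x * d1 u t x + d1 u t x)))
        / ((d1 u t x - 1/2 * u t x ^ 2 + u t x) ^ 2) ^ 2) x := by
    have hD := keyD t x
    have hNum := ((((hasD1 h10 t x).add (hasD1 h11 t x)).const_mul 2).mul hD).sub
      ((((hasD1 h0 t x).add (hasD1 h1 t x)).const_mul 2).mul keyD1D)
    have h := (hasD1 h1 t x).sub
      (hNum.div (hD.pow 2) (pow_ne_zero 2 (hden t x)))
    refine h.congr_deriv ?_
    simp only [Pi.add_apply, Pi.sub_apply, Pi.mul_apply, Pi.pow_apply, Nat.cast_ofNat]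
    ring
  have e11 : d1 (d1 (fun a b => u a b - 2 * (d0 u a b + d1 u a b)
      / (d1 u a b - (1/2) * (u a b)^2 + u a b))) t x
      = d1 (d1 u) t x -
        ((2 * (d1 (d1 (d0 u)) t x + d1 (d1 (d1 u)) t x)
              * (d1 u t x - 1/2 * u t x ^ 2 + u t x)
            + 2 * (d1 (d0 u) t x + d1 (d1 u) t x)
              * (d1 (d1 u) t x - u t x * d1 u t x + d1 u t x)
          - (2 * (d1 (d0 u) t x + d1 (d1 u) t x)
              * (d1 (d1 u) t x - u t x * d1 u t x + d1 u t x)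
            + 2 * (d0 u t x + d1 u t x)
              * (d1 (d1 (d1 u)) t x - (d1 u t x * d1 u t x + u t x * d1 (d1 u) t x)
                  + d1 (d1 u) t x)))
          * ((d1 u t x - 1/2 * u t x ^ 2 + u t x) ^ 2)
         - (2 * (d1 (d0 u) t x + d1 (d1 u) t x)
              * (d1 u t x - 1/2 * u t x ^ 2 + u t x)
            - 2 * (d0 u t x + d1 u t x)
              * (d1 (d1 u) t x - u t x * d1 u t x + d1 u t x))
           * (2 * (d1 u t x - 1/2 * u t x ^ 2 + u t x)
              * (d1 (d1 u) t x - u t x * d1 u t x + d1 u t x)))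
        / ((d1 u t x - 1/2 * u t x ^ 2 + u t x) ^ 2) ^ 2 := by
    have hfun : (fun y => d1 (fun a b => u a b - 2 * (d0 u a b + d1 u a b)
        / (d1 u a b - (1/2) * (u a b)^2 + u a b)) t y)
        = fun y => d1 u t y - (2 * (d1 (d0 u) t y + d1 (d1 u) t y)
            * (d1 u t y - 1/2 * u t y ^ 2 + u t y)
          - 2 * (d0 u t y + d1 u t y)
            * (d1 (d1 u) t y - u t y * d1 u t y + d1 u t y))
        / (d1 u t y - 1/2 * u t y ^ 2 + u t y) ^ 2 := funext fun y => e1 t y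
    show deriv (fun y => d1 (fun a b => u a b - 2 * (d0 u a b + d1 u a b)
        / (d1 u a b - (1/2) * (u a b)^2 + u a b)) t y) x = _
    rw [hfun]
    exact key11.deriv
  -- the Burgers equation and its consequences at (t, x)
  have sw1 : d0 (d1 u) t x = d1 (d0 u) t x := swapD hu t x
  have swfun : d0 (d1 u) = d1 (d0 u) := funext fun a => funext fun b => swapD hu a b
  have sw2 : d0 (d1 (d1 u)) t x = d1 (d1 (d0 u)) t x := by
    rw [swapD h1 t x, swfun]
  have hb1 : d1 (d0 u) t x + (d1 u t x * d1 u t x + u t x * d1 (d1 u) t x)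
      - d1 (d1 (d1 u)) t x = 0 := by
    have hZ := ((hasD1 h0 t x).add ((hasD1 hu t x).mul (hasD1 h1 t x))).sub (hasD1 h11 t x)
    have hf0 : (fun y => d0 u t y + u t y * d1 u t y - d1 (d1 u) t y) = fun _ => (0:ℝ) :=
      funext fun y => hburgers t y
    rw [show ((fun y => d0 u t y) + (fun y => u t y) * (fun y => d1 u t y) - fun y => d1 (d1 u) t y) = fun _ => (0:ℝ) from hf0] at hZ
    exact hZ.unique (hasDerivAt_const x 0)
  have hb0 : d0 (d0 u) t x + (d0 u t x * d1 u t x + u t x * d0 (d1 u) t x)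
      - d0 (d1 (d1 u)) t x = 0 := by
    have hZ := ((hasD0 h0 t x).add ((hasD0 hu t x).mul (hasD0 h1 t x))).sub
      (hasD0 (smoothD1 h1) t x)
    have hf0 : (fun s => d0 u s x + u s x * d1 u s x - d1 (d1 u) s x) = fun _ => (0:ℝ) :=
      funext fun s => hburgers s x
    rw [show ((fun s => d0 u s x) + (fun s => u s x) * (fun s => d1 u s x) - fun s => d1 (d1 u) s x) = fun _ => (0:ℝ) from hf0] at hZ
    exact hZ.unique (hasDerivAt_const t 0)
  rw [sw1, sw2] at hb0
  have eC11 : d1 (d1 u) t x = d0 u t x + u t x * d1 u t x := by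
    linarith [hburgers t x]
  have eT111 : d1 (d1 (d1 u)) t x = d1 (d0 u) t x
      + (d1 u t x * d1 u t x + u t x * d1 (d1 u) t x) := by linarith
  have eC00 : d0 (d0 u) t x = d1 (d1 (d0 u)) t x
      - (d0 u t x * d1 u t x + u t x * d1 (d0 u) t x) := by linarith
  rw [e0, e1 t x, e11, sw1, eC00, eT111, eC11]
  have hd := hden t x
  clear * - hd
  generalize hDv : d1 u t x - 1/2 * u t x ^ 2 + u t x = Dv at hd ⊢
  generalize d1 (d1 (d0 u)) t x = T011
  generalize d1 (d0 u) t x = C01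
  generalize d0 u t x = B0
  generalize hB1 : d1 u t x = B1 at hDv ⊢
  generalize hA : u t x = A at hDv ⊢
  field_simp [hd]
  rw [← hDv]
  ring
end

section
/- The function u(x0,x1) = 2C1 e^{2x0} / (-1 - 4C1 x1 e^{2x0} + sqrt(1 + 4C1 x1 e^{2x0})) is a solution of the nonlinear heat equation u_0 - ∂_1(u^{-2} u_1) = 0 on a domain where 1 + 4C1 x1 e^{2x0} > 0 and the denominator is nonzero. -/
lemma key (C1 a b : ℝ) (hg : 0 < 1 + 4*C1*b*Real.exp (2*a))
    (hD : (-1 - 4*C1*b*Real.exp (2*a) + Real.sqrt (1+4*C1*b*Real.exp (2*a))) ≠ 0) :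
    HasDerivAt (fun y => 2*C1*Real.exp (2*a)
        / (-1 - 4*C1*y*Real.exp (2*a) + Real.sqrt (1+4*C1*y*Real.exp (2*a))))
      ((0 * (-1 - 4*C1*b*Real.exp (2*a) + Real.sqrt (1+4*C1*b*Real.exp (2*a)))
        - 2*C1*Real.exp (2*a) * (-(4*C1*1*Real.exp (2*a)) + 4*C1*1*Real.exp (2*a) / (2*Real.sqrt (1+4*C1*b*Real.exp (2*a)))))
        / (-1 - 4*C1*b*Real.exp (2*a) + Real.sqrt (1+4*C1*b*Real.exp (2*a)))^2) b := by
  have hw : HasDerivAt (fun y : ℝ => 1 + 4*C1*y*Real.exp (2*a)) (4*C1*1*Real.exp (2*a)) b :=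
    (((hasDerivAt_id b).const_mul (4*C1)).mul_const (Real.exp (2*a))).const_add 1
  have hs := hw.sqrt (ne_of_gt hg)
  have hlin : HasDerivAt (fun y : ℝ => -1 - 4*C1*y*Real.exp (2*a)) (-(4*C1*1*Real.exp (2*a))) b :=
    (((hasDerivAt_id b).const_mul (4*C1)).mul_const (Real.exp (2*a))).const_sub (-1)
  exact (hasDerivAt_const b (2*C1*Real.exp (2*a))).div (hlin.add hs) hD

lemma flux_alg (K A D s : ℝ) (hK : K ≠ 0) (hD : D ≠ 0) (hs : s ≠ 0) (hA : A = 2*K) :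
    (K / D)^(-2 : ℤ) * ((0 * D - K * (-A + A / (2*s))) / D^2) = 2 - 1/s := by
  subst hA
  have h : (K / D)^(-2 : ℤ) = (K/D * (K/D))⁻¹ := by
    rw [zpow_neg]; norm_num [sq, zpow_two]
  rw [h]; field_simp; ring

theorem nonlin_heat_sol (C1 : ℝ) (hC1 : C1 ≠ 0) :
    ∀ x0 x1 : ℝ,
      0 < 1 + 4 * C1 * x1 * Real.exp (2 * x0) →
      (-1 - 4 * C1 * x1 * Real.exp (2 * x0) + Real.sqrt (1 + 4 * C1 * x1 * Real.exp (2 * x0))) ≠ 0 →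
    d0 (fun a b => 2 * C1 * Real.exp (2 * a)
        / (-1 - 4 * C1 * b * Real.exp (2 * a) + Real.sqrt (1 + 4 * C1 * b * Real.exp (2 * a)))) x0 x1
      - d1 (fun a b =>
          ((2 * C1 * Real.exp (2 * a)
            / (-1 - 4 * C1 * b * Real.exp (2 * a) + Real.sqrt (1 + 4 * C1 * b * Real.exp (2 * a)))) : ℝ)^(-2 : ℤ)
          * d1 (fun s r => 2 * C1 * Real.exp (2 * s)
            / (-1 - 4 * C1 * r * Real.exp (2 * s) + Real.sqrt (1 + 4 * C1 * r * Real.exp (2 * s)))) a b) x0 x1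
      = 0 := by
  intro x0 x1 hg hD
  have hEx : (0:ℝ) < Real.exp (2*x0) := Real.exp_pos _
  set S := Real.sqrt (1 + 4*C1*x1*Real.exp (2*x0)) with hSdef
  have hSpos : 0 < S := Real.sqrt_pos.mpr hg
  have hS2 : S * S = 1 + 4*C1*x1*Real.exp (2*x0) := Real.mul_self_sqrt hg.le
  -- ∂0 u at (x0,x1)
  have hExp : HasDerivAt (fun a : ℝ => Real.exp (2*a)) (Real.exp (2*x0) * 2) x0 := by
    simpa [Function.comp_def] using (Real.hasDerivAt_exp (2*x0)).comp x0 ((hasDerivAt_id x0).const_mul 2)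
  have hnum : HasDerivAt (fun a : ℝ => 2*C1*Real.exp (2*a)) (2*C1*(Real.exp (2*x0)*2)) x0 :=
    hExp.const_mul (2*C1)
  have hw0 : HasDerivAt (fun a : ℝ => 1 + 4*C1*x1*Real.exp (2*a)) (4*C1*x1*(Real.exp (2*x0)*2)) x0 :=
    (hExp.const_mul (4*C1*x1)).const_add 1
  have hs0 := hw0.sqrt (ne_of_gt hg)
  have hlin0 : HasDerivAt (fun a : ℝ => -1 - 4*C1*x1*Real.exp (2*a)) (-(4*C1*x1*(Real.exp (2*x0)*2))) x0 :=
    (hExp.const_mul (4*C1*x1)).const_sub (-1)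
  have hd0 := hnum.div (hlin0.add hs0) hD
  have e0 : d0 (fun a b => 2 * C1 * Real.exp (2 * a)
        / (-1 - 4 * C1 * b * Real.exp (2 * a) + Real.sqrt (1 + 4 * C1 * b * Real.exp (2 * a)))) x0 x1
      = (2*C1*(Real.exp (2*x0)*2) * (-1 - 4*C1*x1*Real.exp (2*x0) + S)
          - 2*C1*Real.exp (2*x0) * (-(4*C1*x1*(Real.exp (2*x0)*2))
            + 4*C1*x1*(Real.exp (2*x0)*2) / (2*S)))
        / (-1 - 4*C1*x1*Real.exp (2*x0) + S)^2 := by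
    simp only [d0]
    exact hd0.deriv
  -- the flux function coincides near x1 with 2 - 1/sqrt(...)
  have hK : 2*C1*Real.exp (2*x0) ≠ 0 := by positivity
  have hEv : (fun b => ((2 * C1 * Real.exp (2 * x0)
            / (-1 - 4 * C1 * b * Real.exp (2 * x0) + Real.sqrt (1 + 4 * C1 * b * Real.exp (2 * x0)))) : ℝ)^(-2 : ℤ)
          * deriv (fun r => 2 * C1 * Real.exp (2 * x0)
            / (-1 - 4 * C1 * r * Real.exp (2 * x0) + Real.sqrt (1 + 4 * C1 * r * Real.exp (2 * x0)))) b)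
        =ᶠ[nhds x1] (fun b => 2 - 1 / Real.sqrt (1 + 4*C1*b*Real.exp (2*x0))) := by
    have hco : ContinuousAt (fun b : ℝ => 1 + 4*C1*b*Real.exp (2*x0)) x1 := by fun_prop
    have hDc : ContinuousAt (fun b : ℝ => -1 - 4*C1*b*Real.exp (2*x0)
        + Real.sqrt (1 + 4*C1*b*Real.exp (2*x0))) x1 := by fun_prop
    have h1 : ∀ᶠ b in nhds x1, 0 < 1 + 4*C1*b*Real.exp (2*x0) :=
      hco.eventually (lt_mem_nhds hg)
    have h2 : ∀ᶠ b in nhds x1, (-1 - 4*C1*b*Real.exp (2*x0)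
        + Real.sqrt (1 + 4*C1*b*Real.exp (2*x0))) ≠ 0 := hDc.eventually_ne hD
    filter_upwards [h1, h2] with b hb1 hb2
    have hkd := (key C1 x0 b hb1 hb2).deriv
    have : deriv (fun r => 2 * C1 * Real.exp (2 * x0)
            / (-1 - 4 * C1 * r * Real.exp (2 * x0) + Real.sqrt (1 + 4 * C1 * r * Real.exp (2 * x0)))) b
        = ((0 * (-1 - 4*C1*b*Real.exp (2*x0) + Real.sqrt (1+4*C1*b*Real.exp (2*x0)))
        - 2*C1*Real.exp (2*x0) * (-(4*C1*1*Real.exp (2*x0)) + 4*C1*1*Real.exp (2*x0) / (2*Real.sqrt (1+4*C1*b*Real.exp (2*x0)))))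
        / (-1 - 4*C1*b*Real.exp (2*x0) + Real.sqrt (1+4*C1*b*Real.exp (2*x0)))^2) := hkd
    rw [this]
    exact flux_alg _ _ _ _ hK hb2 (Real.sqrt_pos.mpr hb1).ne' (by ring)
  -- derivative of the simplified flux
  have hwb : HasDerivAt (fun b : ℝ => 1 + 4*C1*b*Real.exp (2*x0)) (4*C1*1*Real.exp (2*x0)) x1 :=
    (((hasDerivAt_id x1).const_mul (4*C1)).mul_const (Real.exp (2*x0))).const_add 1
  have hsb := hwb.sqrt (ne_of_gt hg)
  have hinv := (hasDerivAt_const x1 (1:ℝ)).div hsb hSpos.ne'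
  have hGflux := hinv.const_sub (2:ℝ)
  have e1 : d1 (fun a b =>
          ((2 * C1 * Real.exp (2 * a)
            / (-1 - 4 * C1 * b * Real.exp (2 * a) + Real.sqrt (1 + 4 * C1 * b * Real.exp (2 * a)))) : ℝ)^(-2 : ℤ)
          * d1 (fun s r => 2 * C1 * Real.exp (2 * s)
            / (-1 - 4 * C1 * r * Real.exp (2 * s) + Real.sqrt (1 + 4 * C1 * r * Real.exp (2 * s)))) a b) x0 x1
      = -((0 * S - 1 * (4*C1*1*Real.exp (2*x0) / (2*S))) / S^2) := by
    simp only [d1]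
    rw [hEv.deriv_eq]
    exact hGflux.deriv
  rw [e0, e1]
  have hDS : (-1 - 4*C1*x1*Real.exp (2*x0) + S) ≠ 0 := hD
  have hx14 : 4*C1*x1*Real.exp (2*x0) = S*S - 1 := by linarith
  rw [hx14] at hDS ⊢
  have hD' : S - S*S ≠ 0 := by
    intro h; apply hDS; linarith
  rw [show (-1 - (S*S-1) + S) = S - S*S by ring]
  have h1S : 1 - S ≠ 0 := by intro h; apply hD'; linear_combination S*h
  field_simp
  linear_combination (-4*C1*Real.exp (2*x0)*(1-2*S)) * hx14
end

section
/- The function u(x0,x1,x2) = C1 · sqrt(x2² + x1² - x0²)/(x0 + x1) is a solution of the equation u₁₁u₂₂ - u₁₂² - (u₀₀u₂₂ - u₀₂²) - (u₀₀u₁₁ - u₀₁²) = 0 on the domain where x2² + x1² - x0² > 0 and x0 + x1 ≠ 0. -/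
open Topology Filter


noncomputable def p0 (u : ℝ → ℝ → ℝ → ℝ) : ℝ → ℝ → ℝ → ℝ := fun a b c => deriv (fun s => u s b c) a
noncomputable def p1 (u : ℝ → ℝ → ℝ → ℝ) : ℝ → ℝ → ℝ → ℝ := fun a b c => deriv (fun s => u a s c) b
noncomputable def p2 (u : ℝ → ℝ → ℝ → ℝ) : ℝ → ℝ → ℝ → ℝ := fun a b c => deriv (fun s => u a b s) c

section aux
variable (C1 a b c : ℝ)

lemma hA0 (h1 : 0 < c^2+b^2-a^2) (h2 : a+b ≠ 0) :
    HasDerivAt (fun t => C1 * Real.sqrt (c^2+b^2-t^2) / (t+b))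
      (-(C1*(a*b+b^2+c^2)) * Real.sqrt (c^2+b^2-a^2) / ((c^2+b^2-a^2) * (a+b)^2)) a := by
  have hs : Real.sqrt (c^2+b^2-a^2) ^ 2 = c^2+b^2-a^2 := Real.sq_sqrt h1.le
  have hs0 : Real.sqrt (c^2+b^2-a^2) ≠ 0 := (Real.sqrt_pos.mpr h1).ne'
  have hD : (c^2+b^2-a^2) ≠ 0 := h1.ne'
  have hq : HasDerivAt (fun t : ℝ => c^2+b^2-t^2) (-(2*a)) a := by
    simpa using ((hasDerivAt_pow 2 a).const_sub (c^2+b^2))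
  have hsq := hq.sqrt hD
  have hl : HasDerivAt (fun t : ℝ => t + b) 1 a := (hasDerivAt_id a).add_const b
  have h := (hsq.const_mul C1).div hl h2
  refine h.congr_deriv ?_; symm
  field_simp
  rw [hs]
  push_cast
  ring

lemma hA1 (h1 : 0 < c^2+b^2-a^2) (h2 : a+b ≠ 0) :
    HasDerivAt (fun t => C1 * Real.sqrt (c^2+t^2-a^2) / (a+t))
      (C1*(a^2+a*b-c^2) * Real.sqrt (c^2+b^2-a^2) / ((c^2+b^2-a^2) * (a+b)^2)) b := by
  have hs : Real.sqrt (c^2+b^2-a^2) ^ 2 = c^2+b^2-a^2 := Real.sq_sqrt h1.le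
  have hs0 : Real.sqrt (c^2+b^2-a^2) ≠ 0 := (Real.sqrt_pos.mpr h1).ne'
  have hD : (c^2+b^2-a^2) ≠ 0 := h1.ne'
  have hq : HasDerivAt (fun t : ℝ => c^2+t^2-a^2) (2*b) b := by
    simpa using (((hasDerivAt_pow 2 b).const_add (c^2)).sub_const (a^2))
  have hq' : HasDerivAt (fun t => Real.sqrt (c^2+t^2-a^2)) ((2*b)/(2*Real.sqrt (c^2+b^2-a^2))) b := by
    have := hq.sqrt (show c^2+b^2-a^2 ≠ 0 from hD)
    convert this using 2
  have hl : HasDerivAt (fun t : ℝ => a + t) 1 b := (hasDerivAt_id b).const_add a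
  have h := (hq'.const_mul C1).div hl h2
  refine h.congr_deriv ?_; symm
  field_simp
  rw [hs]
  push_cast
  ring

lemma hA2 (h1 : 0 < c^2+b^2-a^2) (h2 : a+b ≠ 0) :
    HasDerivAt (fun t => C1 * Real.sqrt (t^2+b^2-a^2) / (a+b))
      (C1*c * Real.sqrt (c^2+b^2-a^2) / ((c^2+b^2-a^2) * (a+b))) c := by
  have hs : Real.sqrt (c^2+b^2-a^2) ^ 2 = c^2+b^2-a^2 := Real.sq_sqrt h1.le
  have hs0 : Real.sqrt (c^2+b^2-a^2) ≠ 0 := (Real.sqrt_pos.mpr h1).ne'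
  have hD : (c^2+b^2-a^2) ≠ 0 := h1.ne'
  have hq : HasDerivAt (fun t : ℝ => t^2+b^2-a^2) (2*c) c := by
    simpa using (((hasDerivAt_pow 2 c).add_const (b^2)).sub_const (a^2))
  have hq' : HasDerivAt (fun t => Real.sqrt (t^2+b^2-a^2)) ((2*c)/(2*Real.sqrt (c^2+b^2-a^2))) c := by
    have := hq.sqrt (show c^2+b^2-a^2 ≠ 0 from hD)
    convert this using 2
  have h := (hq'.const_mul C1).div_const (a+b)
  refine h.congr_deriv ?_; symm
  field_simp
  rw [hs]

lemma hB00 (h1 : 0 < c^2+b^2-a^2) (h2 : a+b ≠ 0) :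
    HasDerivAt (fun t => -(C1*(t*b+b^2+c^2)) * Real.sqrt (c^2+b^2-t^2) / ((c^2+b^2-t^2)*(t+b)^2))
      (C1*(-2*a^3*b-3*a^2*b^2-3*a^2*c^2+b^4+3*b^2*c^2+2*c^4) * Real.sqrt (c^2+b^2-a^2)
        / ((c^2+b^2-a^2)^2 * (a+b)^3)) a := by
  have hs : Real.sqrt (c^2+b^2-a^2) ^ 2 = c^2+b^2-a^2 := Real.sq_sqrt h1.le
  have hs0 : Real.sqrt (c^2+b^2-a^2) ≠ 0 := (Real.sqrt_pos.mpr h1).ne'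
  have hD : (c^2+b^2-a^2) ≠ 0 := h1.ne'
  have hq : HasDerivAt (fun t : ℝ => c^2+b^2-t^2) (-(2*a)) a := by
    simpa using ((hasDerivAt_pow 2 a).const_sub (c^2+b^2))
  have hsq := hq.sqrt hD
  have hl : HasDerivAt (fun t : ℝ => t + b) 1 a := (hasDerivAt_id a).add_const b
  have hP : HasDerivAt (fun t : ℝ => -(C1*(t*b+b^2+c^2))) (-(C1*b)) a := by
    have : HasDerivAt (fun t : ℝ => t*b+b^2+c^2) b a := by
      simpa using (((hasDerivAt_id a).mul_const b).add_const (b^2) |>.add_const (c^2))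
    exact (this.const_mul C1).neg
  have hden := hq.mul (hl.pow 2)
  have hne : (c^2+b^2-a^2)*(a+b)^2 ≠ 0 := mul_ne_zero hD (pow_ne_zero 2 h2)
  have h := (hP.mul hsq).div hden hne
  refine h.congr_deriv ?_; symm
  simp only [Pi.mul_apply, Pi.pow_apply, Pi.div_apply]
  field_simp
  rw [hs]
  push_cast
  ring

lemma hB11 (h1 : 0 < c^2+b^2-a^2) (h2 : a+b ≠ 0) :
    HasDerivAt (fun t => C1*(a^2+a*t-c^2) * Real.sqrt (c^2+t^2-a^2) / ((c^2+t^2-a^2)*(a+t)^2))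
      (C1*(a^4-3*a^2*b^2-3*a^2*c^2-2*a*b^3+3*b^2*c^2+2*c^4) * Real.sqrt (c^2+b^2-a^2)
        / ((c^2+b^2-a^2)^2 * (a+b)^3)) b := by
  have hs : Real.sqrt (c^2+b^2-a^2) ^ 2 = c^2+b^2-a^2 := Real.sq_sqrt h1.le
  have hs0 : Real.sqrt (c^2+b^2-a^2) ≠ 0 := (Real.sqrt_pos.mpr h1).ne'
  have hD : (c^2+b^2-a^2) ≠ 0 := h1.ne'
  have hq : HasDerivAt (fun t : ℝ => c^2+t^2-a^2) (2*b) b := by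
    simpa using (((hasDerivAt_pow 2 b).const_add (c^2)).sub_const (a^2))
  have hsq : HasDerivAt (fun t => Real.sqrt (c^2+t^2-a^2)) ((2*b)/(2*Real.sqrt (c^2+b^2-a^2))) b := by
    have := hq.sqrt (show c^2+b^2-a^2 ≠ 0 from hD)
    convert this using 2
  have hl : HasDerivAt (fun t : ℝ => a + t) 1 b := (hasDerivAt_id b).const_add a
  have hP : HasDerivAt (fun t : ℝ => C1*(a^2+a*t-c^2)) (C1*a) b := by
    have : HasDerivAt (fun t : ℝ => a^2+a*t-c^2) a b := by
      simpa using ((((hasDerivAt_id b).const_mul a).const_add (a^2)).sub_const (c^2))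
    simpa using this.const_mul C1
  have hq2 : HasDerivAt (fun t : ℝ => (c^2+t^2-a^2)*(a+t)^2)
      ((2*b)*(a+b)^2 + (c^2+b^2-a^2)*(2*(a+b)^1*1)) b := hq.mul (hl.pow 2)
  have hne : (c^2+b^2-a^2)*(a+b)^2 ≠ 0 := mul_ne_zero hD (pow_ne_zero 2 h2)
  have h := (hP.mul hsq).div hq2 hne
  refine h.congr_deriv ?_; symm
  simp only [Pi.mul_apply, Pi.pow_apply, Pi.div_apply]
  field_simp
  rw [hs]
  push_cast
  ring

lemma hB22 (h1 : 0 < c^2+b^2-a^2) (h2 : a+b ≠ 0) :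
    HasDerivAt (fun t => C1*t * Real.sqrt (t^2+b^2-a^2) / ((t^2+b^2-a^2)*(a+b)))
      (C1*(b^2-a^2) * Real.sqrt (c^2+b^2-a^2) / ((c^2+b^2-a^2)^2 * (a+b))) c := by
  have hs : Real.sqrt (c^2+b^2-a^2) ^ 2 = c^2+b^2-a^2 := Real.sq_sqrt h1.le
  have hs0 : Real.sqrt (c^2+b^2-a^2) ≠ 0 := (Real.sqrt_pos.mpr h1).ne'
  have hD : (c^2+b^2-a^2) ≠ 0 := h1.ne'
  have hq : HasDerivAt (fun t : ℝ => t^2+b^2-a^2) (2*c) c := by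
    simpa using (((hasDerivAt_pow 2 c).add_const (b^2)).sub_const (a^2))
  have hsq : HasDerivAt (fun t => Real.sqrt (t^2+b^2-a^2)) ((2*c)/(2*Real.sqrt (c^2+b^2-a^2))) c := by
    have := hq.sqrt (show c^2+b^2-a^2 ≠ 0 from hD)
    convert this using 2
  have hP : HasDerivAt (fun t : ℝ => C1*t) C1 c := by
    simpa using (hasDerivAt_id c).const_mul C1
  have hden : HasDerivAt (fun t : ℝ => (t^2+b^2-a^2)*(a+b)) ((2*c)*(a+b)) c := by
    simpa using hq.mul_const (a+b)
  have hne : (c^2+b^2-a^2)*(a+b) ≠ 0 := mul_ne_zero hD h2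
  have h := (hP.mul hsq).div hden hne
  refine h.congr_deriv ?_; symm
  simp only [Pi.mul_apply, Pi.pow_apply, Pi.div_apply]
  field_simp
  rw [hs]
  push_cast
  ring

lemma hB12 (h1 : 0 < c^2+b^2-a^2) (h2 : a+b ≠ 0) :
    HasDerivAt (fun t => C1*c * Real.sqrt (c^2+t^2-a^2) / ((c^2+t^2-a^2)*(a+t)))
      (-(C1*c*(a*b+2*b^2+c^2-a^2)) * Real.sqrt (c^2+b^2-a^2) / ((c^2+b^2-a^2)^2 * (a+b)^2)) b := by
  have hs : Real.sqrt (c^2+b^2-a^2) ^ 2 = c^2+b^2-a^2 := Real.sq_sqrt h1.le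
  have hs0 : Real.sqrt (c^2+b^2-a^2) ≠ 0 := (Real.sqrt_pos.mpr h1).ne'
  have hD : (c^2+b^2-a^2) ≠ 0 := h1.ne'
  have hq : HasDerivAt (fun t : ℝ => c^2+t^2-a^2) (2*b) b := by
    simpa using (((hasDerivAt_pow 2 b).const_add (c^2)).sub_const (a^2))
  have hsq : HasDerivAt (fun t => Real.sqrt (c^2+t^2-a^2)) ((2*b)/(2*Real.sqrt (c^2+b^2-a^2))) b := by
    have := hq.sqrt (show c^2+b^2-a^2 ≠ 0 from hD)
    convert this using 2
  have hl : HasDerivAt (fun t : ℝ => a + t) 1 b := (hasDerivAt_id b).const_add a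
  have hden := hq.mul hl
  have hne : (c^2+b^2-a^2)*(a+b) ≠ 0 := mul_ne_zero hD h2
  have h := (hsq.const_mul (C1*c)).div hden hne
  refine h.congr_deriv ?_; symm
  simp only [Pi.mul_apply, Pi.pow_apply, Pi.div_apply]
  field_simp
  rw [hs]
  push_cast
  ring

lemma hB02 (h1 : 0 < c^2+b^2-a^2) (h2 : a+b ≠ 0) :
    HasDerivAt (fun t => C1*c * Real.sqrt (c^2+b^2-t^2) / ((c^2+b^2-t^2)*(t+b)))
      (-(C1*c*(b^2+c^2-a*b-2*a^2)) * Real.sqrt (c^2+b^2-a^2) / ((c^2+b^2-a^2)^2 * (a+b)^2)) a := by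
  have hs : Real.sqrt (c^2+b^2-a^2) ^ 2 = c^2+b^2-a^2 := Real.sq_sqrt h1.le
  have hs0 : Real.sqrt (c^2+b^2-a^2) ≠ 0 := (Real.sqrt_pos.mpr h1).ne'
  have hD : (c^2+b^2-a^2) ≠ 0 := h1.ne'
  have hq : HasDerivAt (fun t : ℝ => c^2+b^2-t^2) (-(2*a)) a := by
    simpa using ((hasDerivAt_pow 2 a).const_sub (c^2+b^2))
  have hsq := hq.sqrt hD
  have hl : HasDerivAt (fun t : ℝ => t + b) 1 a := (hasDerivAt_id a).add_const b
  have hden := hq.mul hl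
  have hne : (c^2+b^2-a^2)*(a+b) ≠ 0 := mul_ne_zero hD h2
  have h := (hsq.const_mul (C1*c)).div hden hne
  refine h.congr_deriv ?_; symm
  simp only [Pi.mul_apply, Pi.pow_apply, Pi.div_apply]
  field_simp
  rw [hs]
  push_cast
  ring

lemma hB01 (h1 : 0 < c^2+b^2-a^2) (h2 : a+b ≠ 0) :
    HasDerivAt (fun t => C1*(t^2+t*b-c^2) * Real.sqrt (c^2+b^2-t^2) / ((c^2+b^2-t^2)*(t+b)^2))
      (C1*(a^4+a^3*b+a*b^3+b^4-3*a^2*c^2+3*b^2*c^2+2*c^4) * Real.sqrt (c^2+b^2-a^2)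
        / ((c^2+b^2-a^2)^2 * (a+b)^3)) a := by
  have hs : Real.sqrt (c^2+b^2-a^2) ^ 2 = c^2+b^2-a^2 := Real.sq_sqrt h1.le
  have hs0 : Real.sqrt (c^2+b^2-a^2) ≠ 0 := (Real.sqrt_pos.mpr h1).ne'
  have hD : (c^2+b^2-a^2) ≠ 0 := h1.ne'
  have hq : HasDerivAt (fun t : ℝ => c^2+b^2-t^2) (-(2*a)) a := by
    simpa using ((hasDerivAt_pow 2 a).const_sub (c^2+b^2))
  have hsq := hq.sqrt hD
  have hl : HasDerivAt (fun t : ℝ => t + b) 1 a := (hasDerivAt_id a).add_const b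
  have hP : HasDerivAt (fun t : ℝ => C1*(t^2+t*b-c^2)) (C1*(2*a+b)) a := by
    have : HasDerivAt (fun t : ℝ => t^2+t*b-c^2) (2*a+b) a := by
      simpa using (((hasDerivAt_pow 2 a).add ((hasDerivAt_id a).mul_const b)).sub_const (c^2))
    simpa using this.const_mul C1
  have hden := hq.mul (hl.pow 2)
  have hne : (c^2+b^2-a^2)*(a+b)^2 ≠ 0 := mul_ne_zero hD (pow_ne_zero 2 h2)
  have h := (hP.mul hsq).div hden hne
  refine h.congr_deriv ?_; symm
  simp only [Pi.mul_apply, Pi.pow_apply, Pi.div_apply]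
  field_simp
  rw [hs]
  push_cast
  ring

end aux

theorem slid_sol2 (C1 : ℝ) :
    ∀ x0 x1 x2 : ℝ, x2^2 + x1^2 - x0^2 > 0 → x0 + x1 ≠ 0 →
    (fun u : ℝ → ℝ → ℝ → ℝ =>
      p1 (p1 u) x0 x1 x2 * p2 (p2 u) x0 x1 x2 - (p1 (p2 u) x0 x1 x2)^2
      - (p0 (p0 u) x0 x1 x2 * p2 (p2 u) x0 x1 x2 - (p0 (p2 u) x0 x1 x2)^2)
      - (p0 (p0 u) x0 x1 x2 * p1 (p1 u) x0 x1 x2 - (p0 (p1 u) x0 x1 x2)^2))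
    (fun a b c => C1 * Real.sqrt (c^2 + b^2 - a^2) / (a + b)) = 0 := by
  intro x0 x1 x2 h1 h2
  have e0 : ∀ᶠ t in 𝓝 x0, 0 < x2^2+x1^2-t^2 ∧ t + x1 ≠ 0 := by
    have hc1 : ContinuousAt (fun t : ℝ => x2^2+x1^2-t^2) x0 := by fun_prop
    have hc2 : ContinuousAt (fun t : ℝ => t + x1) x0 := by fun_prop
    exact (continuousAt_const.eventually_lt hc1 h1).and (hc2.eventually_ne h2)
  have e1 : ∀ᶠ t in 𝓝 x1, 0 < x2^2+t^2-x0^2 ∧ x0 + t ≠ 0 := by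
    have hc1 : ContinuousAt (fun t : ℝ => x2^2+t^2-x0^2) x1 := by fun_prop
    have hc2 : ContinuousAt (fun t : ℝ => x0 + t) x1 := by fun_prop
    exact (continuousAt_const.eventually_lt hc1 h1).and (hc2.eventually_ne h2)
  have e2 : ∀ᶠ t in 𝓝 x2, 0 < t^2+x1^2-x0^2 ∧ x0 + x1 ≠ 0 := by
    have hc1 : ContinuousAt (fun t : ℝ => t^2+x1^2-x0^2) x2 := by fun_prop
    exact (continuousAt_const.eventually_lt hc1 h1).and (Filter.Eventually.of_forall fun _ => h2)
  simp only [p0, p1, p2]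
  have h00 : deriv (fun t => deriv (fun s => C1 * Real.sqrt (x2^2 + x1^2 - s^2) / (s + x1)) t) x0
      = C1*(-2*x0^3*x1-3*x0^2*x1^2-3*x0^2*x2^2+x1^4+3*x1^2*x2^2+2*x2^4) * Real.sqrt (x2^2+x1^2-x0^2)
        / ((x2^2+x1^2-x0^2)^2 * (x0+x1)^3) := by
    have hev : (fun t => deriv (fun s => C1 * Real.sqrt (x2^2 + x1^2 - s^2) / (s + x1)) t)
        =ᶠ[𝓝 x0] fun t => -(C1*(t*x1+x1^2+x2^2)) * Real.sqrt (x2^2+x1^2-t^2) / ((x2^2+x1^2-t^2) * (t+x1)^2) := by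
      filter_upwards [e0] with t ht
      exact (hA0 C1 t x1 x2 ht.1 ht.2).deriv
    rw [hev.deriv_eq]
    exact (hB00 C1 x0 x1 x2 h1 h2).deriv
  have h11 : deriv (fun t => deriv (fun s => C1 * Real.sqrt (x2^2 + s^2 - x0^2) / (x0 + s)) t) x1
      = C1*(x0^4-3*x0^2*x1^2-3*x0^2*x2^2-2*x0*x1^3+3*x1^2*x2^2+2*x2^4) * Real.sqrt (x2^2+x1^2-x0^2)
        / ((x2^2+x1^2-x0^2)^2 * (x0+x1)^3) := by
    have hev : (fun t => deriv (fun s => C1 * Real.sqrt (x2^2 + s^2 - x0^2) / (x0 + s)) t)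
        =ᶠ[𝓝 x1] fun t => C1*(x0^2+x0*t-x2^2) * Real.sqrt (x2^2+t^2-x0^2) / ((x2^2+t^2-x0^2) * (x0+t)^2) := by
      filter_upwards [e1] with t ht
      exact (hA1 C1 x0 t x2 ht.1 ht.2).deriv
    rw [hev.deriv_eq]
    exact (hB11 C1 x0 x1 x2 h1 h2).deriv
  have h22 : deriv (fun t => deriv (fun s => C1 * Real.sqrt (s^2 + x1^2 - x0^2) / (x0 + x1)) t) x2
      = C1*(x1^2-x0^2) * Real.sqrt (x2^2+x1^2-x0^2) / ((x2^2+x1^2-x0^2)^2 * (x0+x1)) := by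
    have hev : (fun t => deriv (fun s => C1 * Real.sqrt (s^2 + x1^2 - x0^2) / (x0 + x1)) t)
        =ᶠ[𝓝 x2] fun t => C1*t * Real.sqrt (t^2+x1^2-x0^2) / ((t^2+x1^2-x0^2) * (x0+x1)) := by
      filter_upwards [e2] with t ht
      exact (hA2 C1 x0 x1 t ht.1 ht.2).deriv
    rw [hev.deriv_eq]
    exact (hB22 C1 x0 x1 x2 h1 h2).deriv
  have h12 : deriv (fun t => deriv (fun s => C1 * Real.sqrt (s^2 + t^2 - x0^2) / (x0 + t)) x2) x1
      = -(C1*x2*(x0*x1+2*x1^2+x2^2-x0^2)) * Real.sqrt (x2^2+x1^2-x0^2)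
        / ((x2^2+x1^2-x0^2)^2 * (x0+x1)^2) := by
    have hev : (fun t => deriv (fun s => C1 * Real.sqrt (s^2 + t^2 - x0^2) / (x0 + t)) x2)
        =ᶠ[𝓝 x1] fun t => C1*x2 * Real.sqrt (x2^2+t^2-x0^2) / ((x2^2+t^2-x0^2) * (x0+t)) := by
      filter_upwards [e1] with t ht
      exact (hA2 C1 x0 t x2 ht.1 ht.2).deriv
    rw [hev.deriv_eq]
    exact (hB12 C1 x0 x1 x2 h1 h2).deriv
  have h02 : deriv (fun t => deriv (fun s => C1 * Real.sqrt (s^2 + x1^2 - t^2) / (t + x1)) x2) x0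
      = -(C1*x2*(x1^2+x2^2-x0*x1-2*x0^2)) * Real.sqrt (x2^2+x1^2-x0^2)
        / ((x2^2+x1^2-x0^2)^2 * (x0+x1)^2) := by
    have hev : (fun t => deriv (fun s => C1 * Real.sqrt (s^2 + x1^2 - t^2) / (t + x1)) x2)
        =ᶠ[𝓝 x0] fun t => C1*x2 * Real.sqrt (x2^2+x1^2-t^2) / ((x2^2+x1^2-t^2) * (t+x1)) := by
      filter_upwards [e0] with t ht
      exact (hA2 C1 t x1 x2 ht.1 ht.2).deriv
    rw [hev.deriv_eq]
    exact (hB02 C1 x0 x1 x2 h1 h2).deriv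
  have h01 : deriv (fun t => deriv (fun s => C1 * Real.sqrt (x2^2 + s^2 - t^2) / (t + s)) x1) x0
      = C1*(x0^4+x0^3*x1+x0*x1^3+x1^4-3*x0^2*x2^2+3*x1^2*x2^2+2*x2^4) * Real.sqrt (x2^2+x1^2-x0^2)
        / ((x2^2+x1^2-x0^2)^2 * (x0+x1)^3) := by
    have hev : (fun t => deriv (fun s => C1 * Real.sqrt (x2^2 + s^2 - t^2) / (t + s)) x1)
        =ᶠ[𝓝 x0] fun t => C1*(t^2+t*x1-x2^2) * Real.sqrt (x2^2+x1^2-t^2) / ((x2^2+x1^2-t^2) * (t+x1)^2) := by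
      filter_upwards [e0] with t ht
      exact (hA1 C1 t x1 x2 ht.1 ht.2).deriv
    rw [hev.deriv_eq]
    exact (hB01 C1 x0 x1 x2 h1 h2).deriv
  rw [h00, h11, h22, h12, h02, h01]
  have hD : (x2^2+x1^2-x0^2) ≠ 0 := h1.ne'
  field_simp
  ring
end

section
/- The function u(x0,x1,x2) = (C2(x2² + x1² - x0²) + C1)/(x0 + x1) is a solution of the equation u₁₁u₂₂ - u₁₂² - (u₀₀u₂₂ - u₀₂²) - (u₀₀u₁₁ - u₀₁²) = 0 on the domain x0 + x1 ≠ 0. -/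
lemma ev_ne {q x : ℝ} (h : x + q ≠ 0) : ∀ᶠ s in nhds x, s + q ≠ 0 := by
  have hc : Continuous (fun s : ℝ => s + q) := by continuity
  have : IsOpen {s : ℝ | s + q ≠ 0} := isOpen_ne.preimage hc
  exact this.mem_nhds h

-- d/ds (K/(s+q) + m*s + n) = -K/(s+q)^2 + m
lemma hd1 (K q m n x : ℝ) (h : x + q ≠ 0) :
    HasDerivAt (fun s => K/(s+q) + m*s + n) (-K/(x+q)^2 + m) x := by
  have h1 : HasDerivAt (fun s : ℝ => s + q) 1 x := (hasDerivAt_id x).add_const q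
  have h2 := ((hasDerivAt_const x K).div h1 h).add ((hasDerivAt_id x).const_mul m)
  have h3 := h2.add_const n
  refine h3.congr_deriv ?_
  field_simp
  ring

-- d/ds (-K/(s+q)^2 + m) = 2K/(x+q)^3
lemma hd2 (K q m x : ℝ) (h : x + q ≠ 0) :
    HasDerivAt (fun s => -K/(s+q)^2 + m) (2*K/(x+q)^3) x := by
  have h1 : HasDerivAt (fun s : ℝ => s + q) 1 x := (hasDerivAt_id x).add_const q
  have hp : HasDerivAt (fun s : ℝ => (s+q)^2) (2*(x+q)) x := by
    have := h1.pow 2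
    refine this.congr_deriv ?_; ring
  have h2 := ((hasDerivAt_const x (-K)).div hp (pow_ne_zero 2 h)).add_const m
  refine h2.congr_deriv ?_
  field_simp
  ring

-- d/ds (M/(s+q)) = -M/(x+q)^2
lemma hd3 (M q x : ℝ) (h : x + q ≠ 0) :
    HasDerivAt (fun s => M/(s+q)) (-M/(x+q)^2) x := by
  have := hd1 M q 0 0 x h
  simp only [zero_mul, add_zero] at this
  convert this using 1

theorem slid_sol3 (C1 C2 : ℝ) :
    ∀ x0 x1 x2 : ℝ, x0 + x1 ≠ 0 →
    (fun u : ℝ → ℝ → ℝ → ℝ =>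
      p1 (p1 u) x0 x1 x2 * p2 (p2 u) x0 x1 x2 - (p1 (p2 u) x0 x1 x2)^2
      - (p0 (p0 u) x0 x1 x2 * p2 (p2 u) x0 x1 x2 - (p0 (p2 u) x0 x1 x2)^2)
      - (p0 (p0 u) x0 x1 x2 * p1 (p1 u) x0 x1 x2 - (p0 (p1 u) x0 x1 x2)^2))
    (fun a b c => (C2 * (c^2 + b^2 - a^2) + C1) / (a + b)) = 0 := by
  intro a b c h
  set u : ℝ → ℝ → ℝ → ℝ := fun a b c => (C2 * (c^2 + b^2 - a^2) + C1) / (a + b) with hu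
  simp only [p0, p1, p2]
  set K : ℝ := C2 * c^2 + C1 with hK
  -- first derivatives
  have dA : ∀ s y : ℝ, s + y ≠ 0 →
      deriv (fun t => u t y c) s = -K/(s+y)^2 + (-C2) := by
    intro s y hs
    have he : (fun t => u t y c) =ᶠ[nhds s] (fun t => K/(t+y) + (-C2)*t + C2*y) := by
      filter_upwards [ev_ne hs] with t ht
      simp only [hu, hK]
      field_simp
      ring
    rw [he.deriv_eq, (hd1 K y (-C2) (C2*y) s hs).deriv]
  have dB : ∀ s y : ℝ, s + y ≠ 0 →
      deriv (fun t => u y t c) s = -K/(s+y)^2 + C2 := by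
    intro s y hs
    have hy : y + s ≠ 0 := by rwa [add_comm]
    have he : (fun t => u y t c) =ᶠ[nhds s] (fun t => K/(t+y) + C2*t + (-(C2*y))) := by
      filter_upwards [ev_ne hs] with t ht
      have : y + t ≠ 0 := by rwa [add_comm]
      simp only [hu, hK]
      field_simp
      ring
    rw [he.deriv_eq, (hd1 K y C2 (-(C2*y)) s hs).deriv]
  have dC : ∀ s y z : ℝ, deriv (fun t => u s y t) z = 2*C2*z/(s+y) := by
    intro s y z
    have h1 : HasDerivAt (fun t : ℝ => C2 * (t^2 + y^2 - s^2) + C1) (2*C2*z) z := by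
      have := (((hasDerivAt_pow 2 z).add_const (y^2)).sub_const (s^2)).const_mul C2
      have h2 := this.add_const C1
      refine h2.congr_deriv ?_; ring
    have := h1.div_const (s+y)
    rw [hu]
    rw [this.deriv]
  -- second derivatives
  have d00 : deriv (fun s => deriv (fun t => u t b c) s) a = 2*K/(a+b)^3 := by
    have he : (fun s => deriv (fun t => u t b c) s) =ᶠ[nhds a]
        (fun s => -K/(s+b)^2 + (-C2)) := by
      filter_upwards [ev_ne h] with s hs
      exact dA s b hs
    rw [he.deriv_eq, (hd2 K b (-C2) a h).deriv]
  have d11 : deriv (fun s => deriv (fun t => u a t c) s) b = 2*K/(a+b)^3 := by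
    have ha : b + a ≠ 0 := by rwa [add_comm]
    have he : (fun s => deriv (fun t => u a t c) s) =ᶠ[nhds b]
        (fun s => -K/(s+a)^2 + C2) := by
      filter_upwards [ev_ne ha] with s hs
      exact dB s a hs
    rw [he.deriv_eq, (hd2 K a C2 b ha).deriv]
    rw [add_comm b a]
  have d01 : deriv (fun s => deriv (fun t => u s t c) b) a = 2*K/(a+b)^3 := by
    have he : (fun s => deriv (fun t => u s t c) b) =ᶠ[nhds a]
        (fun s => -K/(s+b)^2 + C2) := by
      filter_upwards [ev_ne h] with s hs
      have : b + s ≠ 0 := by rwa [add_comm]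
      rw [dB b s this, add_comm b s]
    rw [he.deriv_eq, (hd2 K b C2 a h).deriv]
  have d22 : deriv (fun s => deriv (fun t => u a b t) s) c = 2*C2/(a+b) := by
    have he : (fun s => deriv (fun t => u a b t) s) = (fun s => (2*C2/(a+b))*s) := by
      funext s
      rw [dC a b s]; ring
    rw [he]
    have h5 : HasDerivAt (fun s : ℝ => (2*C2/(a+b))*s) (2*C2/(a+b)) c := by
      simpa using (hasDerivAt_id c).const_mul (2*C2/(a+b))
    exact h5.deriv
  have d02 : deriv (fun s => deriv (fun t => u s b t) c) a = -(2*C2*c)/(a+b)^2 := by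
    have he : (fun s => deriv (fun t => u s b t) c) = (fun s => (2*C2*c)/(s+b)) := by
      funext s
      rw [dC s b c]
    rw [he, (hd3 (2*C2*c) b a h).deriv]
  have d12 : deriv (fun s => deriv (fun t => u a s t) c) b = -(2*C2*c)/(a+b)^2 := by
    have ha : b + a ≠ 0 := by rwa [add_comm]
    have he : (fun s => deriv (fun t => u a s t) c) = (fun s => (2*C2*c)/(s+a)) := by
      funext s
      rw [dC a s c, add_comm a s]
    rw [he, (hd3 (2*C2*c) a b ha).deriv, add_comm b a]
  rw [d00, d11, d01, d22, d02, d12]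
  field_simp
  ring
end

section
/- Equivariance of Slid under Lorentz boosts: if u : ℝ³ → ℝ is a smooth solution of u₁₁u₂₂ - u₁₂² - (u₀₀u₂₂ - u₀₂²) - (u₀₀u₁₁ - u₀₁²) = 0, and c ∈ ℝ, then the function ũ(x0,x1,x2) = u(x0 cosh c + x2 sinh c, x1, x0 sinh c + x2 cosh c) is also a solution of the same equation. -/
set_option maxHeartbeats 1000000


namespace SlidBoostAux

abbrev X3 := ℝ × ℝ × ℝ

lemma line0 (a b c : ℝ) : HasDerivAt (fun s : ℝ => ((s, b, c) : X3)) ((1,0,0) : X3) a :=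
  HasDerivAt.prodMk (hasDerivAt_id a) (HasDerivAt.prodMk (hasDerivAt_const a b) (hasDerivAt_const a c))

lemma line1 (a b c : ℝ) : HasDerivAt (fun s : ℝ => ((a, s, c) : X3)) ((0,1,0) : X3) b :=
  HasDerivAt.prodMk (hasDerivAt_const b a) (HasDerivAt.prodMk (hasDerivAt_id b) (hasDerivAt_const b c))

lemma line2 (a b c : ℝ) : HasDerivAt (fun s : ℝ => ((a, b, s) : X3)) ((0,0,1) : X3) c :=
  HasDerivAt.prodMk (hasDerivAt_const c a) (HasDerivAt.prodMk (hasDerivAt_const c b) (hasDerivAt_id c))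

lemma pd0 (V : X3 → ℝ) (hV : Differentiable ℝ V) (a b c : ℝ) :
    deriv (fun s => V (s,b,c)) a = fderiv ℝ V (a,b,c) (1,0,0) :=
  ((hV (a,b,c)).hasFDerivAt.comp_hasDerivAt a (line0 a b c)).deriv

lemma pd1 (V : X3 → ℝ) (hV : Differentiable ℝ V) (a b c : ℝ) :
    deriv (fun s => V (a,s,c)) b = fderiv ℝ V (a,b,c) (0,1,0) :=
  ((hV (a,b,c)).hasFDerivAt.comp_hasDerivAt b (line1 a b c)).deriv

lemma pd2 (V : X3 → ℝ) (hV : Differentiable ℝ V) (a b c : ℝ) :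
    deriv (fun s => V (a,b,s)) c = fderiv ℝ V (a,b,c) (0,0,1) :=
  ((hV (a,b,c)).hasFDerivAt.comp_hasDerivAt c (line2 a b c)).deriv

lemma firstP0 (V : X3 → ℝ) (hV : Differentiable ℝ V) :
    p0 (fun x y z => V (x,y,z)) = fun x y z => fderiv ℝ V (x,y,z) (1,0,0) := by
  funext a b c; exact pd0 V hV a b c

lemma firstP1 (V : X3 → ℝ) (hV : Differentiable ℝ V) :
    p1 (fun x y z => V (x,y,z)) = fun x y z => fderiv ℝ V (x,y,z) (0,1,0) := by
  funext a b c; exact pd1 V hV a b c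

lemma firstP2 (V : X3 → ℝ) (hV : Differentiable ℝ V) :
    p2 (fun x y z => V (x,y,z)) = fun x y z => fderiv ℝ V (x,y,z) (0,0,1) := by
  funext a b c; exact pd2 V hV a b c

lemma clm_deriv {K : X3 → (X3 →L[ℝ] ℝ)} {x : X3} (hK : DifferentiableAt ℝ K x) (e v : X3) :
    fderiv ℝ (fun y => K y e) x v = fderiv ℝ K x v e := by
  have heq : (fun y => K y e) = fun y => (ContinuousLinearMap.apply ℝ ℝ e) (K y) := by
    funext y; simp
  have h := ((ContinuousLinearMap.apply ℝ ℝ e).hasFDerivAt.comp x hK.hasFDerivAt).fderiv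
  rw [heq, show (fun y => (ContinuousLinearMap.apply ℝ ℝ e) (K y))
      = (ContinuousLinearMap.apply ℝ ℝ e) ∘ K from rfl, h]
  simp

section second
variable (V : X3 → ℝ) (hV : ContDiff ℝ (⊤ : ℕ∞) V)

include hV

lemma P00 (a b c : ℝ) : p0 (p0 (fun x y z => V (x,y,z))) a b c
    = fderiv ℝ (fderiv ℝ V) (a,b,c) (1,0,0) (1,0,0) := by
  have hd := hV.differentiable (by simp)
  have hG : Differentiable ℝ (fderiv ℝ V) := (hV.fderiv_right (m := (⊤ : ℕ∞)) (by simp)).differentiable (by simp)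
  have h2 : Differentiable ℝ (fun q : X3 => fderiv ℝ V q (1,0,0)) :=
    hG.clm_apply (differentiable_const _)
  rw [firstP0 V hd]
  rw [show p0 (fun x y z => fderiv ℝ V (x,y,z) (1,0,0)) a b c
      = fderiv ℝ (fun q : X3 => fderiv ℝ V q (1,0,0)) (a,b,c) (1,0,0) from pd0 _ h2 a b c]
  exact clm_deriv (hG _) _ _

lemma P11 (a b c : ℝ) : p1 (p1 (fun x y z => V (x,y,z))) a b c
    = fderiv ℝ (fderiv ℝ V) (a,b,c) (0,1,0) (0,1,0) := by
  have hd := hV.differentiable (by simp)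
  have hG : Differentiable ℝ (fderiv ℝ V) := (hV.fderiv_right (m := (⊤ : ℕ∞)) (by simp)).differentiable (by simp)
  have h2 : Differentiable ℝ (fun q : X3 => fderiv ℝ V q (0,1,0)) :=
    hG.clm_apply (differentiable_const _)
  rw [firstP1 V hd]
  rw [show p1 (fun x y z => fderiv ℝ V (x,y,z) (0,1,0)) a b c
      = fderiv ℝ (fun q : X3 => fderiv ℝ V q (0,1,0)) (a,b,c) (0,1,0) from pd1 _ h2 a b c]
  exact clm_deriv (hG _) _ _

lemma P22 (a b c : ℝ) : p2 (p2 (fun x y z => V (x,y,z))) a b c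
    = fderiv ℝ (fderiv ℝ V) (a,b,c) (0,0,1) (0,0,1) := by
  have hd := hV.differentiable (by simp)
  have hG : Differentiable ℝ (fderiv ℝ V) := (hV.fderiv_right (m := (⊤ : ℕ∞)) (by simp)).differentiable (by simp)
  have h2 : Differentiable ℝ (fun q : X3 => fderiv ℝ V q (0,0,1)) :=
    hG.clm_apply (differentiable_const _)
  rw [firstP2 V hd]
  rw [show p2 (fun x y z => fderiv ℝ V (x,y,z) (0,0,1)) a b c
      = fderiv ℝ (fun q : X3 => fderiv ℝ V q (0,0,1)) (a,b,c) (0,0,1) from pd2 _ h2 a b c]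
  exact clm_deriv (hG _) _ _

lemma P12 (a b c : ℝ) : p1 (p2 (fun x y z => V (x,y,z))) a b c
    = fderiv ℝ (fderiv ℝ V) (a,b,c) (0,1,0) (0,0,1) := by
  have hd := hV.differentiable (by simp)
  have hG : Differentiable ℝ (fderiv ℝ V) := (hV.fderiv_right (m := (⊤ : ℕ∞)) (by simp)).differentiable (by simp)
  have h2 : Differentiable ℝ (fun q : X3 => fderiv ℝ V q (0,0,1)) :=
    hG.clm_apply (differentiable_const _)
  rw [firstP2 V hd]
  rw [show p1 (fun x y z => fderiv ℝ V (x,y,z) (0,0,1)) a b c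
      = fderiv ℝ (fun q : X3 => fderiv ℝ V q (0,0,1)) (a,b,c) (0,1,0) from pd1 _ h2 a b c]
  exact clm_deriv (hG _) _ _

lemma P02 (a b c : ℝ) : p0 (p2 (fun x y z => V (x,y,z))) a b c
    = fderiv ℝ (fderiv ℝ V) (a,b,c) (1,0,0) (0,0,1) := by
  have hd := hV.differentiable (by simp)
  have hG : Differentiable ℝ (fderiv ℝ V) := (hV.fderiv_right (m := (⊤ : ℕ∞)) (by simp)).differentiable (by simp)
  have h2 : Differentiable ℝ (fun q : X3 => fderiv ℝ V q (0,0,1)) :=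
    hG.clm_apply (differentiable_const _)
  rw [firstP2 V hd]
  rw [show p0 (fun x y z => fderiv ℝ V (x,y,z) (0,0,1)) a b c
      = fderiv ℝ (fun q : X3 => fderiv ℝ V q (0,0,1)) (a,b,c) (1,0,0) from pd0 _ h2 a b c]
  exact clm_deriv (hG _) _ _

lemma P01 (a b c : ℝ) : p0 (p1 (fun x y z => V (x,y,z))) a b c
    = fderiv ℝ (fderiv ℝ V) (a,b,c) (1,0,0) (0,1,0) := by
  have hd := hV.differentiable (by simp)
  have hG : Differentiable ℝ (fderiv ℝ V) := (hV.fderiv_right (m := (⊤ : ℕ∞)) (by simp)).differentiable (by simp)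
  have h2 : Differentiable ℝ (fun q : X3 => fderiv ℝ V q (0,1,0)) :=
    hG.clm_apply (differentiable_const _)
  rw [firstP1 V hd]
  rw [show p0 (fun x y z => fderiv ℝ V (x,y,z) (0,1,0)) a b c
      = fderiv ℝ (fun q : X3 => fderiv ℝ V q (0,1,0)) (a,b,c) (1,0,0) from pd0 _ h2 a b c]
  exact clm_deriv (hG _) _ _

end second

/-- The Lorentz boost as a continuous linear map. -/
noncomputable def LL (s t : ℝ) : X3 →L[ℝ] X3 :=
  ((t • ContinuousLinearMap.fst ℝ ℝ (ℝ × ℝ)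
      + s • ((ContinuousLinearMap.snd ℝ ℝ ℝ).comp (ContinuousLinearMap.snd ℝ ℝ (ℝ × ℝ)))).prod
    (((ContinuousLinearMap.fst ℝ ℝ ℝ).comp (ContinuousLinearMap.snd ℝ ℝ (ℝ × ℝ))).prod
      (s • ContinuousLinearMap.fst ℝ ℝ (ℝ × ℝ)
        + t • ((ContinuousLinearMap.snd ℝ ℝ ℝ).comp (ContinuousLinearMap.snd ℝ ℝ (ℝ × ℝ))))))

lemma LL_apply (s t : ℝ) (x : X3) :
    LL s t x = (x.1 * t + x.2.2 * s, x.2.1, x.1 * s + x.2.2 * t) := by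
  simp [LL, mul_comm]

end SlidBoostAux

open SlidBoostAux
theorem slid_boost (u : ℝ → ℝ → ℝ → ℝ)
    (hu : ContDiff ℝ (⊤ : ℕ∞) (fun p : ℝ × ℝ × ℝ => u p.1 p.2.1 p.2.2))
    (hsol : ∀ x0 x1 x2 : ℝ,
      p1 (p1 u) x0 x1 x2 * p2 (p2 u) x0 x1 x2 - (p1 (p2 u) x0 x1 x2)^2
      - (p0 (p0 u) x0 x1 x2 * p2 (p2 u) x0 x1 x2 - (p0 (p2 u) x0 x1 x2)^2)
      - (p0 (p0 u) x0 x1 x2 * p1 (p1 u) x0 x1 x2 - (p0 (p1 u) x0 x1 x2)^2) = 0)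
    (c : ℝ) :
    ∀ x0 x1 x2 : ℝ,
    (fun w : ℝ → ℝ → ℝ → ℝ =>
      p1 (p1 w) x0 x1 x2 * p2 (p2 w) x0 x1 x2 - (p1 (p2 w) x0 x1 x2)^2
      - (p0 (p0 w) x0 x1 x2 * p2 (p2 w) x0 x1 x2 - (p0 (p2 w) x0 x1 x2)^2)
      - (p0 (p0 w) x0 x1 x2 * p1 (p1 w) x0 x1 x2 - (p0 (p1 w) x0 x1 x2)^2))
    (fun a b d => u (a * Real.cosh c + d * Real.sinh c) b (a * Real.sinh c + d * Real.cosh c)) = 0 := by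
  intro x0 x1 x2
  set s := Real.sinh c with hs
  set t := Real.cosh c with ht
  set F : X3 → ℝ := fun p => u p.1 p.2.1 p.2.2 with hF
  set w : ℝ → ℝ → ℝ → ℝ :=
    fun a b d => u (a * t + d * s) b (a * s + d * t) with hw
  show p1 (p1 w) x0 x1 x2 * p2 (p2 w) x0 x1 x2 - (p1 (p2 w) x0 x1 x2)^2
      - (p0 (p0 w) x0 x1 x2 * p2 (p2 w) x0 x1 x2 - (p0 (p2 w) x0 x1 x2)^2)
      - (p0 (p0 w) x0 x1 x2 * p1 (p1 w) x0 x1 x2 - (p0 (p1 w) x0 x1 x2)^2) = 0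
  set Wf : X3 → ℝ := fun p => w p.1 p.2.1 p.2.2 with hWf
  have hWeq : Wf = F ∘ (LL s t) := by
    funext p
    simp [hWf, hF, hw, LL_apply]
  have hW : ContDiff ℝ (⊤ : ℕ∞) Wf := by
    rw [hWeq]; exact hu.comp (LL s t).contDiff
  have hFd : Differentiable ℝ F := hu.differentiable (by simp)
  set G : X3 → (X3 →L[ℝ] ℝ) := fderiv ℝ F with hG
  have hGsm : ContDiff ℝ (⊤ : ℕ∞) G := hu.fderiv_right (by simp)
  have hGd : Differentiable ℝ G := hGsm.differentiable (by simp)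
  set x : X3 := (x0, x1, x2) with hx
  set y : X3 := LL s t x with hy
  set B : X3 →L[ℝ] X3 →L[ℝ] ℝ := fderiv ℝ G y with hB
  -- second derivatives of w in terms of B
  have hHeq : fderiv ℝ Wf = fun z => (G (LL s t z)).comp (LL s t) := by
    funext z
    rw [hWeq, fderiv_comp z (hFd _) (LL s t).differentiableAt,
      ContinuousLinearMap.fderiv]
  set Φ : (X3 →L[ℝ] ℝ) →L[ℝ] (X3 →L[ℝ] ℝ) :=
    (ContinuousLinearMap.compL ℝ X3 X3 ℝ).flip (LL s t) with hΦ
  have key : ∀ v v' : X3, fderiv ℝ (fderiv ℝ Wf) x v v' = B (LL s t v) (LL s t v') := by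
    intro v v'
    have hcomp : fderiv ℝ Wf = ⇑Φ ∘ (G ∘ ⇑(LL s t)) := by
      rw [hHeq]; funext z; simp [hΦ]
    have hGL : DifferentiableAt ℝ (G ∘ ⇑(LL s t)) x :=
      (hGd _).comp x (LL s t).differentiableAt
    rw [hcomp, fderiv_comp x Φ.differentiableAt hGL, ContinuousLinearMap.fderiv,
      fderiv_comp x (hGd _) (LL s t).differentiableAt,
      ContinuousLinearMap.fderiv]
    simp [hΦ, hB, hy]
  -- symmetry of B
  have sym : ∀ v v' : X3, B v v' = B v' v := by
    intro v v'
    exact second_derivative_symmetric (f := F) (fun z => (hFd z).hasFDerivAt)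
      (hGd y).hasFDerivAt v v'
  -- basis images under LL
  have hL0 : LL s t ((1,0,0) : X3) = ((t,0,s) : X3) := by simp [LL_apply]
  have hL1 : LL s t ((0,1,0) : X3) = ((0,1,0) : X3) := by simp [LL_apply]
  have hL2 : LL s t ((0,0,1) : X3) = ((s,0,t) : X3) := by simp [LL_apply]
  -- bilinear expansion
  have hvec : ∀ p q r : ℝ, ((p,q,r) : X3)
      = p • ((1,0,0) : X3) + q • ((0,1,0) : X3) + r • ((0,0,1) : X3) := by
    intro p q r
    simp [Prod.ext_iff]
  have Bexp : ∀ p q r p' q' r' : ℝ, B (p,q,r) (p',q',r')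
      = p*p'*(B (1,0,0) (1,0,0)) + p*q'*(B (1,0,0) (0,1,0)) + p*r'*(B (1,0,0) (0,0,1))
      + q*p'*(B (0,1,0) (1,0,0)) + q*q'*(B (0,1,0) (0,1,0)) + q*r'*(B (0,1,0) (0,0,1))
      + r*p'*(B (0,0,1) (1,0,0)) + r*q'*(B (0,0,1) (0,1,0)) + r*r'*(B (0,0,1) (0,0,1)) := by
    intro p q r p' q' r'
    rw [hvec p q r, hvec p' q' r']
    simp only [map_add, map_smul, ContinuousLinearMap.add_apply,
      ContinuousLinearMap.smul_apply, smul_eq_mul]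
    ring
  -- second partials of u at y, and of w at x
  have e00 : p0 (p0 u) y.1 y.2.1 y.2.2 = B (1,0,0) (1,0,0) := P00 F hu y.1 y.2.1 y.2.2
  have e11 : p1 (p1 u) y.1 y.2.1 y.2.2 = B (0,1,0) (0,1,0) := P11 F hu y.1 y.2.1 y.2.2
  have e22 : p2 (p2 u) y.1 y.2.1 y.2.2 = B (0,0,1) (0,0,1) := P22 F hu y.1 y.2.1 y.2.2
  have e12 : p1 (p2 u) y.1 y.2.1 y.2.2 = B (0,1,0) (0,0,1) := P12 F hu y.1 y.2.1 y.2.2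
  have e02 : p0 (p2 u) y.1 y.2.1 y.2.2 = B (1,0,0) (0,0,1) := P02 F hu y.1 y.2.1 y.2.2
  have e01 : p0 (p1 u) y.1 y.2.1 y.2.2 = B (1,0,0) (0,1,0) := P01 F hu y.1 y.2.1 y.2.2
  have E0 := hsol y.1 y.2.1 y.2.2
  rw [e00, e11, e22, e12, e02, e01] at E0
  have f00 : p0 (p0 w) x0 x1 x2 = B ((t,0,s) : X3) ((t,0,s) : X3) := by
    rw [P00 Wf hW x0 x1 x2, key, hL0]
  have f11 : p1 (p1 w) x0 x1 x2 = B ((0,1,0) : X3) ((0,1,0) : X3) := by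
    rw [P11 Wf hW x0 x1 x2, key, hL1]
  have f22 : p2 (p2 w) x0 x1 x2 = B ((s,0,t) : X3) ((s,0,t) : X3) := by
    rw [P22 Wf hW x0 x1 x2, key, hL2]
  have f12 : p1 (p2 w) x0 x1 x2 = B ((0,1,0) : X3) ((s,0,t) : X3) := by
    rw [P12 Wf hW x0 x1 x2, key, hL1, hL2]
  have f02 : p0 (p2 w) x0 x1 x2 = B ((t,0,s) : X3) ((s,0,t) : X3) := by
    rw [P02 Wf hW x0 x1 x2, key, hL0, hL2]
  have f01 : p0 (p1 w) x0 x1 x2 = B ((t,0,s) : X3) ((0,1,0) : X3) := by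
    rw [P01 Wf hW x0 x1 x2, key, hL0, hL1]
  rw [f00, f11, f22, f12, f02, f01, Bexp t 0 s t 0 s, Bexp s 0 t s 0 t,
    Bexp 0 1 0 s 0 t, Bexp t 0 s s 0 t, Bexp t 0 s 0 1 0]
  have s10 : B (0,1,0) (1,0,0) = B (1,0,0) (0,1,0) := sym _ _
  have s20 : B (0,0,1) (1,0,0) = B (1,0,0) (0,0,1) := sym _ _
  have s21 : B (0,0,1) (0,1,0) = B (0,1,0) (0,0,1) := sym _ _
  rw [s10, s20, s21]
  have hst : t^2 - s^2 = 1 := Real.cosh_sq_sub_sinh_sq c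
  set A00 := B (1,0,0) (1,0,0)
  set A01 := B (1,0,0) (0,1,0)
  set A02 := B (1,0,0) (0,0,1)
  set A11 := B (0,1,0) (0,1,0)
  set A12 := B (0,1,0) (0,0,1)
  set A22 := B (0,0,1) (0,0,1)
  linear_combination E0 + (A11*A22 - A12^2 + A01^2 + A02^2 - A00*A22 - A00*A11
    - s^2*A02^2 + s^2*A00*A22 + t^2*A02^2 - t^2*A00*A22) * hst
end
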